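/- arXiv:1208.4763 — 6 statements merged into one kernel-verified Lean document; each statement's English description precedes it below -/
import Mathlib

section
/- For any scattering function S and permutations σ, ρ ∈ S_n, the functions S^σ on ℝⁿ satisfy the composition law S^{σ∘ρ}(θ) = S^σ(θ) · S^ρ(θ^σ), where θ^σ = (θ_{σ(1)}, …, θ_{σ(n)}). -/
open scoped BigOperators

/-- `S^σ(θ) = ∏_{i<j, σ(i)>σ(j)} S(θ_{σ(i)} - θ_{σ(j)})`. -/
noncomputable def Sperm (S : ℝ → ℂ) {n : ℕ} (σ : Equiv.Perm (Fin n)) (θ : Fin n → ℝ) : ℂ :=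
  ∏ p ∈ Finset.univ.filter (fun p : Fin n × Fin n => p.1 < p.2 ∧ σ p.2 < σ p.1),
    S (θ (σ p.1) - θ (σ p.2))

theorem Sperm_eq_prod_ite (S : ℝ → ℂ) {n : ℕ} (τ : Equiv.Perm (Fin n)) (η : Fin n → ℝ) :
    Sperm S τ η = ∏ p ∈ Finset.univ.filter (fun p : Fin n × Fin n => p.1 < p.2),
      (if τ p.2 < τ p.1 then S (η (τ p.1) - η (τ p.2)) else 1) := by
  classical
  rw [Sperm, Finset.prod_filter, Finset.prod_filter]
  refine Finset.prod_congr rfl fun p _ => ?_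
  by_cases h1 : p.1 < p.2 <;> by_cases h2 : τ p.2 < τ p.1 <;> simp [h1, h2]

/-- Composition law `S^{σ∘ρ}(θ) = S^σ(θ) · S^ρ(θ^σ)` where `θ^σ = θ ∘ σ`. -/
theorem stmt1 (S : ℝ → ℂ) (hsmooth : ContDiff ℝ (⊤ : ℕ∞) S)
    (hinv : ∀ θ : ℝ, S θ * S (-θ) = 1)
    (hconj : ∀ θ : ℝ, S (-θ) = (starRingEnd ℂ) (S θ))
    (n : ℕ) (σ ρ : Equiv.Perm (Fin n)) (θ : Fin n → ℝ) :
    Sperm S (σ * ρ) θ = Sperm S σ θ * Sperm S ρ (θ ∘ σ) := by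
  classical
  rw [Sperm_eq_prod_ite, Sperm_eq_prod_ite, Sperm_eq_prod_ite]
  set A := Finset.univ.filter (fun p : Fin n × Fin n => p.1 < p.2) with hA
  have memA : ∀ p : Fin n × Fin n, p ∈ A ↔ p.1 < p.2 := by
    intro p; simp [hA]
  have hσ : (∏ p ∈ A, (if σ p.2 < σ p.1 then S (θ (σ p.1) - θ (σ p.2)) else 1))
      = ∏ p ∈ A, (if ρ p.1 < ρ p.2
          then (if σ (ρ p.2) < σ (ρ p.1) then S (θ (σ (ρ p.1)) - θ (σ (ρ p.2))) else 1)
          else (if σ (ρ p.1) < σ (ρ p.2) then S (θ (σ (ρ p.2)) - θ (σ (ρ p.1))) else 1)) := by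
    refine Finset.prod_bij'
      (fun p _ => if ρ⁻¹ p.1 < ρ⁻¹ p.2 then (ρ⁻¹ p.1, ρ⁻¹ p.2) else (ρ⁻¹ p.2, ρ⁻¹ p.1))
      (fun p _ => if ρ p.1 < ρ p.2 then (ρ p.1, ρ p.2) else (ρ p.2, ρ p.1))
      ?_ ?_ ?_ ?_ ?_
    · intro p hp
      rw [memA] at hp ⊢
      have hne : ρ⁻¹ p.1 ≠ ρ⁻¹ p.2 := fun h => absurd (ρ⁻¹.injective h) (ne_of_lt hp)
      by_cases h : ρ⁻¹ p.1 < ρ⁻¹ p.2 <;> simp only [Equiv.Perm.inv_def] at h hne ⊢ <;> simp [h]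
      exact lt_of_le_of_ne (not_lt.mp h) (Ne.symm hne)
    · intro p hp
      rw [memA] at hp ⊢
      have hne : ρ p.1 ≠ ρ p.2 := fun h => absurd (ρ.injective h) (ne_of_lt hp)
      by_cases h : ρ p.1 < ρ p.2 <;> simp [h]
      exact lt_of_le_of_ne (not_lt.mp h) (Ne.symm hne)
    · intro p hp
      rw [memA] at hp
      by_cases h : ρ⁻¹ p.1 < ρ⁻¹ p.2 <;> simp only [Equiv.Perm.inv_def] at h ⊢ <;> simp [h, hp, not_lt.mpr (le_of_lt hp)]
    · intro p hp
      rw [memA] at hp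
      by_cases h : ρ p.1 < ρ p.2 <;> simp [h, hp, not_lt.mpr (le_of_lt hp)]
    · intro p hp
      rw [memA] at hp
      by_cases h : ρ⁻¹ p.1 < ρ⁻¹ p.2 <;> simp only [Equiv.Perm.inv_def] at h ⊢ <;> simp [h, hp, asymm hp]
  rw [hσ, ← Finset.prod_mul_distrib]
  refine Finset.prod_congr rfl fun p hp => ?_
  rw [memA] at hp
  have hne : ρ p.1 ≠ ρ p.2 := fun h => absurd (ρ.injective h) (ne_of_lt hp)
  by_cases h1 : ρ p.1 < ρ p.2
  · have h2 : ¬ ρ p.2 < ρ p.1 := asymm h1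
    simp only [h1, if_true, h2, if_false, mul_one]
    rfl
  · have h1' : ρ p.2 < ρ p.1 := lt_of_le_of_ne (not_lt.mp h1) (Ne.symm hne)
    have hne2 : σ (ρ p.1) ≠ σ (ρ p.2) := fun h => absurd (σ.injective h) hne
    simp only [h1, if_false, h1', if_true]
    by_cases h3 : σ (ρ p.1) < σ (ρ p.2)
    · have h4 : ¬ σ (ρ p.2) < σ (ρ p.1) := asymm h3
      simp only [h3, if_true, Equiv.Perm.mul_apply, h4, if_false]
      have := hinv (θ (σ (ρ p.2)) - θ (σ (ρ p.1)))
      rw [neg_sub] at this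
      simpa using this.symm
    · have h4 : σ (ρ p.2) < σ (ρ p.1) := lt_of_le_of_ne (not_lt.mp h3) (Ne.symm hne2)
      simp only [h3, if_false, Equiv.Perm.mul_apply, h4, if_true, one_mul]
      rfl
end

section
/- The map D_n : S_n → GL(L²(ℝⁿ)) defined by (D_n(σ)f)(θ) = S^σ(θ) f(θ^σ) is a unitary representation of the symmetric group S_n on L²(ℝⁿ). -/
open MeasureTheory
open scoped BigOperators

namespace Stmt2Aux

variable {n : ℕ}

lemma Sperm_one (S : ℝ → ℂ) (θ : Fin n → ℝ) : Sperm S 1 θ = 1 := by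
  apply Finset.prod_eq_one
  intro p hp
  rw [Finset.mem_filter] at hp
  simp only [Finset.mem_filter, Equiv.Perm.coe_one, id_eq] at hp
  exact absurd (hp.2.1.trans hp.2.2) (lt_irrefl _)

/-- value form of `Sperm`. -/
lemma Sperm_value (S : ℝ → ℂ) (σ : Equiv.Perm (Fin n)) (θ : Fin n → ℝ) :
    Sperm S σ θ = ∏ r ∈ Finset.univ.filter
      (fun r : Fin n × Fin n => r.2 < r.1 ∧ σ⁻¹ r.1 < σ⁻¹ r.2), S (θ r.1 - θ r.2) := by
  unfold Sperm
  refine Finset.prod_nbij' (fun p => (σ p.1, σ p.2)) (fun r => (σ⁻¹ r.1, σ⁻¹ r.2)) ?_ ?_ ?_ ?_ ?_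
  · intro p hp; simp only [Finset.mem_filter, Finset.mem_univ, true_and] at hp ⊢
    simpa using And.intro hp.2 hp.1
  · intro r hr; simp only [Finset.mem_filter, Finset.mem_univ, true_and] at hr ⊢
    simpa using And.intro hr.2 hr.1
  · intro p _; simp
  · intro r _; simp
  · intro p _; rfl

/-- Abstract combinatorial core of the cocycle identity. -/
lemma aux_cocycle (S : ℝ → ℂ) (hinv : ∀ θ : ℝ, S θ * S (-θ) = 1) (θ : Fin n → ℝ)
    (a b : Fin n → Fin n) (ha : Function.Injective a) (hb : Function.Injective b) :
    (∏ r : Fin n × Fin n, if r.2 < r.1 ∧ b r.1 < b r.2 then S (θ r.1 - θ r.2) else 1)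
    = (∏ r : Fin n × Fin n, if r.2 < r.1 ∧ a r.1 < a r.2 then S (θ r.1 - θ r.2) else 1)
    * (∏ r : Fin n × Fin n, if a r.2 < a r.1 ∧ b r.1 < b r.2 then S (θ r.1 - θ r.2) else 1) := by
  classical
  have hsplit : (∏ r : Fin n × Fin n, if a r.2 < a r.1 ∧ b r.1 < b r.2 then S (θ r.1 - θ r.2) else 1)
      = (∏ r : Fin n × Fin n,
          if r.2 < r.1 ∧ a r.2 < a r.1 ∧ b r.1 < b r.2 then S (θ r.1 - θ r.2) else 1)
      * (∏ r : Fin n × Fin n,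
          if r.1 < r.2 ∧ a r.2 < a r.1 ∧ b r.1 < b r.2 then S (θ r.1 - θ r.2) else 1) := by
    rw [← Finset.prod_mul_distrib]
    refine Finset.prod_congr rfl fun r _ => ?_
    by_cases h : a r.2 < a r.1 ∧ b r.1 < b r.2
    · have hne12 : r.1 ≠ r.2 := fun he => ne_of_gt h.1 (congrArg a he)
      rcases lt_or_gt_of_ne hne12 with h1 | h1
      · rw [if_pos h, if_neg (fun hc => lt_asymm h1 hc.1), if_pos ⟨h1, h⟩, one_mul]
      · rw [if_pos h, if_pos ⟨h1, h⟩, if_neg (fun hc => lt_asymm h1 hc.1), mul_one]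
    · rw [if_neg h, if_neg (fun hc => h hc.2), if_neg (fun hc => h hc.2), one_mul]
  have hswap : (∏ r : Fin n × Fin n,
          if r.1 < r.2 ∧ a r.2 < a r.1 ∧ b r.1 < b r.2 then S (θ r.1 - θ r.2) else 1)
      = (∏ r : Fin n × Fin n,
          if r.2 < r.1 ∧ a r.1 < a r.2 ∧ b r.2 < b r.1 then S (θ r.2 - θ r.1) else 1) :=
    (Fintype.prod_equiv (Equiv.prodComm (Fin n) (Fin n))
      (fun r : Fin n × Fin n =>
        if r.2 < r.1 ∧ a r.1 < a r.2 ∧ b r.2 < b r.1 then S (θ r.2 - θ r.1) else 1)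
      (fun r : Fin n × Fin n =>
        if r.1 < r.2 ∧ a r.2 < a r.1 ∧ b r.1 < b r.2 then S (θ r.1 - θ r.2) else 1)
      (fun r => rfl)).symm
  rw [hsplit, hswap, ← mul_assoc, ← Finset.prod_mul_distrib, ← Finset.prod_mul_distrib]
  refine Finset.prod_congr rfl fun r _ => ?_
  by_cases hr : r.2 < r.1
  · have hne_a : a r.1 ≠ a r.2 := fun he => ne_of_gt hr (ha he)
    have hne_b : b r.1 ≠ b r.2 := fun he => ne_of_gt hr (hb he)
    have hkey : θ r.2 - θ r.1 = -(θ r.1 - θ r.2) := by ring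
    rcases lt_or_gt_of_ne hne_a with hq | hq <;> rcases lt_or_gt_of_ne hne_b with hp | hp
    · rw [if_pos ⟨hr, hp⟩, if_pos ⟨hr, hq⟩, if_neg (fun hc => lt_asymm hq hc.2.1),
        if_neg (fun hc => lt_asymm hp hc.2.2), mul_one, mul_one]
    · rw [if_neg (fun hc => lt_asymm hp hc.2), if_pos ⟨hr, hq⟩,
        if_neg (fun hc => lt_asymm hq hc.2.1), if_pos ⟨hr, hq, hp⟩, mul_one, hkey]
      exact (hinv _).symm
    · rw [if_pos ⟨hr, hp⟩, if_neg (fun hc => lt_asymm hq hc.2), if_pos ⟨hr, hq, hp⟩,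
        if_neg (fun hc => lt_asymm hp hc.2.2), mul_one, one_mul]
    · rw [if_neg (fun hc => lt_asymm hp hc.2), if_neg (fun hc => lt_asymm hq hc.2),
        if_neg (fun hc => lt_asymm hp hc.2.2), if_neg (fun hc => lt_asymm hq hc.2.1),
        mul_one, mul_one]
  · rw [if_neg (fun hc => hr hc.1), if_neg (fun hc => hr hc.1),
      if_neg (fun hc => hr hc.1), if_neg (fun hc => hr hc.1), mul_one, mul_one]

/-- The cocycle identity. -/
lemma Sperm_mul (S : ℝ → ℂ) (hinv : ∀ θ : ℝ, S θ * S (-θ) = 1)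
    (σ τ : Equiv.Perm (Fin n)) (θ : Fin n → ℝ) :
    Sperm S (σ * τ) θ = Sperm S σ θ * Sperm S τ (θ ∘ σ) := by
  classical
  have hC : Sperm S τ (θ ∘ σ) = ∏ r ∈ Finset.univ.filter
      (fun r : Fin n × Fin n => σ⁻¹ r.2 < σ⁻¹ r.1 ∧ (σ * τ)⁻¹ r.1 < (σ * τ)⁻¹ r.2),
      S (θ r.1 - θ r.2) := by
    rw [Sperm_value]
    refine Finset.prod_nbij' (fun q => (σ q.1, σ q.2)) (fun r => (σ⁻¹ r.1, σ⁻¹ r.2)) ?_ ?_ ?_ ?_ ?_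
    · intro q hq; simp only [Finset.mem_filter, Finset.mem_univ, true_and,
        mul_inv_rev, Equiv.Perm.mul_apply] at hq ⊢
      simpa using hq
    · intro r hr; simp only [Finset.mem_filter, Finset.mem_univ, true_and,
        mul_inv_rev, Equiv.Perm.mul_apply] at hr ⊢
      simpa using hr
    · intro q _; simp
    · intro r _; simp
    · intro q _; rfl
  rw [Sperm_value S (σ * τ), Sperm_value S σ, hC,
    Finset.prod_filter, Finset.prod_filter, Finset.prod_filter]
  exact aux_cocycle S hinv θ (⇑σ⁻¹) (⇑(σ * τ)⁻¹) (Equiv.injective _) (Equiv.injective _)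

lemma norm_S (S : ℝ → ℂ) (hinv : ∀ θ : ℝ, S θ * S (-θ) = 1)
    (hconj : ∀ θ : ℝ, S (-θ) = (starRingEnd ℂ) (S θ)) (x : ℝ) : ‖S x‖ = 1 := by
  have h : S x * (starRingEnd ℂ) (S x) = 1 := by rw [← hconj]; exact hinv x
  rw [Complex.mul_conj] at h
  have h2 : Complex.normSq (S x) = 1 := by exact_mod_cast congrArg Complex.re h
  have := Complex.sq_norm (S x)
  rw [h2] at this
  nlinarith [norm_nonneg (S x)]

lemma norm_Sperm (S : ℝ → ℂ) (hinv : ∀ θ : ℝ, S θ * S (-θ) = 1)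
    (hconj : ∀ θ : ℝ, S (-θ) = (starRingEnd ℂ) (S θ)) (σ : Equiv.Perm (Fin n))
    (θ : Fin n → ℝ) : ‖Sperm S σ θ‖ = 1 := by
  unfold Sperm
  rw [norm_prod]
  exact Finset.prod_eq_one fun p _ => norm_S S hinv hconj _

lemma continuous_Sperm (S : ℝ → ℂ) (hS : Continuous S) (σ : Equiv.Perm (Fin n)) :
    Continuous (Sperm S σ) := by
  unfold Sperm
  exact continuous_finset_prod _ fun p _ =>
    hS.comp ((continuous_apply (σ p.1)).sub (continuous_apply (σ p.2)))

/-- the coordinate permutation as a measurable equiv -/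
def eσ (n : ℕ) (σ : Equiv.Perm (Fin n)) : (Fin n → ℝ) ≃ᵐ (Fin n → ℝ) :=
  (MeasurableEquiv.piCongrLeft (fun _ : Fin n => ℝ) σ).symm

lemma eσ_apply (σ : Equiv.Perm (Fin n)) (θ : Fin n → ℝ) : eσ n σ θ = θ ∘ σ := rfl

lemma eσ_mp (σ : Equiv.Perm (Fin n)) :
    MeasurePreserving (eσ n σ) (volume : Measure (Fin n → ℝ)) volume :=
  (volume_measurePreserving_piCongrLeft _ σ).symm _

variable {S : ℝ → ℂ}

lemma eLpNorm_eq (hS : Continuous S) (hinv : ∀ θ : ℝ, S θ * S (-θ) = 1)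
    (hconj : ∀ θ : ℝ, S (-θ) = (starRingEnd ℂ) (S θ)) (σ : Equiv.Perm (Fin n)) (f : Lp ℂ 2 (volume : Measure (Fin n → ℝ))) :
    eLpNorm (fun θ : Fin n → ℝ => Sperm S σ θ * f (θ ∘ σ)) 2 volume
      = eLpNorm (f : (Fin n → ℝ) → ℂ) 2 volume := by
  have h1 : eLpNorm (fun θ : Fin n → ℝ => Sperm S σ θ * f (θ ∘ σ)) 2 volume
      = eLpNorm ((f : (Fin n → ℝ) → ℂ) ∘ (eσ n σ)) 2 volume := by
    refine eLpNorm_congr_norm_ae (ae_of_all _ fun θ => ?_)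
    rw [norm_mul, norm_Sperm S hinv hconj, one_mul]
    rfl
  rw [h1, eLpNorm_comp_measurePreserving (Lp.aestronglyMeasurable f) (eσ_mp σ)]

lemma memℒp_formula (hS : Continuous S) (hinv : ∀ θ : ℝ, S θ * S (-θ) = 1)
    (hconj : ∀ θ : ℝ, S (-θ) = (starRingEnd ℂ) (S θ)) (σ : Equiv.Perm (Fin n)) (f : Lp ℂ 2 (volume : Measure (Fin n → ℝ))) :
    MemLp (fun θ : Fin n → ℝ => Sperm S σ θ * f (θ ∘ σ)) 2 volume := by
  constructor
  · exact ((continuous_Sperm S hS σ).aestronglyMeasurable).mul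
      ((Lp.aestronglyMeasurable f).comp_quasiMeasurePreserving
        (eσ_mp σ).quasiMeasurePreserving)
  · rw [eLpNorm_eq hS hinv hconj σ f]
    exact Lp.eLpNorm_lt_top f

/-- The basic operator. -/
noncomputable def Tmap (hS : Continuous S) (hinv : ∀ θ : ℝ, S θ * S (-θ) = 1)
    (hconj : ∀ θ : ℝ, S (-θ) = (starRingEnd ℂ) (S θ)) (σ : Equiv.Perm (Fin n)) (f : Lp ℂ 2 (volume : Measure (Fin n → ℝ))) :
    Lp ℂ 2 (volume : Measure (Fin n → ℝ)) :=
  (memℒp_formula hS hinv hconj σ f).toLp _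

lemma Tmap_coe (hS : Continuous S) (hinv : ∀ θ : ℝ, S θ * S (-θ) = 1)
    (hconj : ∀ θ : ℝ, S (-θ) = (starRingEnd ℂ) (S θ)) (σ : Equiv.Perm (Fin n)) (f : Lp ℂ 2 (volume : Measure (Fin n → ℝ))) :
    (Tmap hS hinv hconj σ f : (Fin n → ℝ) → ℂ)
      =ᵐ[volume] fun θ => Sperm S σ θ * f (θ ∘ σ) :=
  MemLp.coeFn_toLp _

lemma comp_ae {g₁ g₂ : (Fin n → ℝ) → ℂ} (σ : Equiv.Perm (Fin n))
    (h : g₁ =ᵐ[(volume : Measure (Fin n → ℝ))] g₂) :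
    (fun θ : Fin n → ℝ => g₁ (θ ∘ σ)) =ᵐ[volume] fun θ => g₂ (θ ∘ σ) :=
  (eσ_mp σ).quasiMeasurePreserving.ae_eq h

lemma Tmap_norm (hS : Continuous S) (hinv : ∀ θ : ℝ, S θ * S (-θ) = 1)
    (hconj : ∀ θ : ℝ, S (-θ) = (starRingEnd ℂ) (S θ)) (σ : Equiv.Perm (Fin n)) (f : Lp ℂ 2 (volume : Measure (Fin n → ℝ))) :
    ‖Tmap hS hinv hconj σ f‖ = ‖f‖ := by
  rw [Tmap, Lp.norm_toLp, eLpNorm_eq hS hinv hconj σ f, Lp.norm_def]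

lemma Tmap_add (hS : Continuous S) (hinv : ∀ θ : ℝ, S θ * S (-θ) = 1)
    (hconj : ∀ θ : ℝ, S (-θ) = (starRingEnd ℂ) (S θ)) (σ : Equiv.Perm (Fin n)) (f g : Lp ℂ 2 (volume : Measure (Fin n → ℝ))) :
    Tmap hS hinv hconj σ (f + g) = Tmap hS hinv hconj σ f + Tmap hS hinv hconj σ g := by
  apply Lp.ext
  have h1 := Tmap_coe hS hinv hconj σ (f + g)
  have h2 := comp_ae σ (Lp.coeFn_add f g)
  have h3 := (Tmap_coe hS hinv hconj σ f).symm
  have h4 := (Tmap_coe hS hinv hconj σ g).symm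
  have h5 := Lp.coeFn_add (Tmap hS hinv hconj σ f) (Tmap hS hinv hconj σ g)
  filter_upwards [h1, h2, h3, h4, h5] with θ e1 e2 e3 e4 e5
  rw [e1, e2, e5, Pi.add_apply, Pi.add_apply, ← e3, ← e4]
  ring

lemma Tmap_smul (hS : Continuous S) (hinv : ∀ θ : ℝ, S θ * S (-θ) = 1)
    (hconj : ∀ θ : ℝ, S (-θ) = (starRingEnd ℂ) (S θ)) (σ : Equiv.Perm (Fin n)) (c : ℂ) (f : Lp ℂ 2 (volume : Measure (Fin n → ℝ))) :
    Tmap hS hinv hconj σ (c • f) = c • Tmap hS hinv hconj σ f := by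
  apply Lp.ext
  have h1 := Tmap_coe hS hinv hconj σ (c • f)
  have h2 := comp_ae σ (Lp.coeFn_smul c f)
  have h3 := (Tmap_coe hS hinv hconj σ f).symm
  have h5 := Lp.coeFn_smul c (Tmap hS hinv hconj σ f)
  filter_upwards [h1, h2, h3, h5] with θ e1 e2 e3 e5
  rw [e1, e2, e5]
  simp only [Pi.smul_apply, smul_eq_mul, ← e3]
  ring

lemma Tmap_mul (hS : Continuous S) (hinv : ∀ θ : ℝ, S θ * S (-θ) = 1)
    (hconj : ∀ θ : ℝ, S (-θ) = (starRingEnd ℂ) (S θ)) (σ τ : Equiv.Perm (Fin n)) (f : Lp ℂ 2 (volume : Measure (Fin n → ℝ))) :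
    Tmap hS hinv hconj (σ * τ) f
      = Tmap hS hinv hconj σ (Tmap hS hinv hconj τ f) := by
  apply Lp.ext
  have h1 := Tmap_coe hS hinv hconj (σ * τ) f
  have h2 := Tmap_coe hS hinv hconj σ (Tmap hS hinv hconj τ f)
  have h3 := comp_ae σ (Tmap_coe hS hinv hconj τ f)
  filter_upwards [h1, h2, h3] with θ e1 e2 e3
  rw [e1, e2, e3, Sperm_mul S hinv σ τ θ]
  have : (θ ∘ σ) ∘ τ = θ ∘ (σ * τ) := by
    funext i; simp [Equiv.Perm.mul_apply, Function.comp]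
  rw [← this]
  ring

lemma Tmap_one (hS : Continuous S) (hinv : ∀ θ : ℝ, S θ * S (-θ) = 1)
    (hconj : ∀ θ : ℝ, S (-θ) = (starRingEnd ℂ) (S θ)) (f : Lp ℂ 2 (volume : Measure (Fin n → ℝ))) :
    Tmap hS hinv hconj (1 : Equiv.Perm (Fin n)) f = f := by
  apply Lp.ext
  have h1 := Tmap_coe hS hinv hconj 1 f
  filter_upwards [h1] with θ e1
  rw [e1, Sperm_one]
  have : θ ∘ (1 : Equiv.Perm (Fin n)) = θ := by funext i; simp
  rw [this, one_mul]

/-- The unitary operator. -/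
noncomputable def Umap (hS : Continuous S) (hinv : ∀ θ : ℝ, S θ * S (-θ) = 1)
    (hconj : ∀ θ : ℝ, S (-θ) = (starRingEnd ℂ) (S θ)) (σ : Equiv.Perm (Fin n)) :
    (Lp ℂ 2 (volume : Measure (Fin n → ℝ))) ≃ₗᵢ[ℂ] (Lp ℂ 2 (volume : Measure (Fin n → ℝ))) where
  toLinearEquiv :=
    { toFun := Tmap hS hinv hconj σ
      map_add' := Tmap_add hS hinv hconj σ
      map_smul' := Tmap_smul hS hinv hconj σ
      invFun := Tmap hS hinv hconj σ⁻¹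
      left_inv := fun f => by
        show Tmap hS hinv hconj σ⁻¹ (Tmap hS hinv hconj σ f) = f
        rw [← Tmap_mul, inv_mul_cancel, Tmap_one]
      right_inv := fun f => by
        show Tmap hS hinv hconj σ (Tmap hS hinv hconj σ⁻¹ f) = f
        rw [← Tmap_mul, mul_inv_cancel, Tmap_one] }
  norm_map' := Tmap_norm hS hinv hconj σ

end Stmt2Aux

/-- There is a unitary representation `D_n` of the symmetric group `S_n` on `L²(ℝⁿ)`
acting by `(D_n(σ)f)(θ) = S^σ(θ) f(θ^σ)`. -/
theorem stmt2 (S : ℝ → ℂ) (hsmooth : ContDiff ℝ (⊤ : ℕ∞) S)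
    (hinv : ∀ θ : ℝ, S θ * S (-θ) = 1)
    (hconj : ∀ θ : ℝ, S (-θ) = (starRingEnd ℂ) (S θ)) (n : ℕ) :
    ∃ D : Equiv.Perm (Fin n) →*
        ((Lp ℂ 2 (volume : Measure (Fin n → ℝ))) ≃ₗᵢ[ℂ] (Lp ℂ 2 (volume : Measure (Fin n → ℝ)))),
      ∀ (σ : Equiv.Perm (Fin n)) (f : Lp ℂ 2 (volume : Measure (Fin n → ℝ))),
        (D σ f : (Fin n → ℝ) → ℂ) =ᵐ[volume] fun θ => Sperm S σ θ * f (θ ∘ σ) := by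
  have hS : Continuous S := hsmooth.continuous
  refine ⟨MonoidHom.mk' (Stmt2Aux.Umap (S := S) hS hinv hconj) (fun σ τ => ?_), fun σ f => ?_⟩
  · apply LinearIsometryEquiv.ext
    intro f
    exact Stmt2Aux.Tmap_mul hS hinv hconj σ τ f
  · exact Stmt2Aux.Tmap_coe hS hinv hconj σ f
end

section
/- On the S-symmetric Fock space, the creation operator z†(f) with f ∈ L²(ℝ) maps the n-particle subspace to the (n+1)-particle subspace with norm bound ‖z†(f)ψ‖ ≤ √(n+1)·‖f‖₂ for ψ in the n-particle subspace, and moreover with an energy-damped weight: ‖e^{ω(H/μ)} z†(f) e^{-ω(H/μ)} ψ‖ ≤ √(n+1)·‖e^{ω(E(·))} f‖₂ ‖ψ‖, where ω is monotone and subadditive. -/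
open MeasureTheory
open scoped BigOperators
open scoped ENNReal

/-- The dimensionless energy `E(θ) = ∑_j cosh θ_j`. -/
noncomputable def energyE {n : ℕ} (θ : Fin n → ℝ) : ℝ := ∑ i, Real.cosh (θ i)

/-- The kernel of `z†(f)ψ = √(n+1)·P^S_{n+1}(f ⊗ ψ)`, written out via the S-symmetrization
`(P^S_{n+1} g)(θ) = (1/(n+1)!) ∑_σ S^σ(θ) g(θ∘σ)` applied to `g = f ⊗ ψ`. -/
noncomputable def zdag (S : ℝ → ℂ) (n : ℕ) (f : ℝ → ℂ) (ψ : (Fin n → ℝ) → ℂ) :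
    (Fin (n + 1) → ℝ) → ℂ :=
  fun θ => (Real.sqrt (n + 1) : ℂ) * ((Nat.factorial (n + 1) : ℂ))⁻¹ *
    ∑ σ : Equiv.Perm (Fin (n + 1)),
      Sperm S σ θ * (f (θ (σ 0)) * ψ (fun i => θ (σ i.succ)))

lemma sperm_cocycle (S : ℝ → ℂ) (hinv : ∀ θ : ℝ, S θ * S (-θ) = 1)
    {m : ℕ} (σ τ : Equiv.Perm (Fin m)) (θ : Fin m → ℝ) :
    Sperm S (σ * τ) θ = Sperm S σ θ * Sperm S τ (θ ∘ σ) := by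
  classical
  set P : Finset (Fin m × Fin m) := Finset.univ.filter (fun p => p.1 < p.2) with hP
  have hrw : ∀ (ρ : Equiv.Perm (Fin m)) (η : Fin m → ℝ),
      Sperm S ρ η = ∏ p ∈ P, (if ρ p.2 < ρ p.1 then S (η (ρ p.1) - η (ρ p.2)) else 1) := by
    intro ρ η
    rw [Sperm, ← Finset.prod_filter]
    congr 1
    rw [hP, Finset.filter_filter]
  rw [hrw, hrw, hrw]
  have hmid : (∏ p ∈ P, (if σ p.2 < σ p.1 then S (θ (σ p.1) - θ (σ p.2)) else 1))
      = ∏ q ∈ P, (if τ q.1 < τ q.2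
          then (if σ (τ q.2) < σ (τ q.1) then S (θ (σ (τ q.1)) - θ (σ (τ q.2))) else 1)
          else (if σ (τ q.1) < σ (τ q.2) then S (θ (σ (τ q.2)) - θ (σ (τ q.1))) else 1)) := by
    refine (Finset.prod_nbij'
      (fun q => if τ q.1 < τ q.2 then (τ q.1, τ q.2) else (τ q.2, τ q.1))
      (fun p => if τ.symm p.1 < τ.symm p.2 then (τ.symm p.1, τ.symm p.2)
        else (τ.symm p.2, τ.symm p.1)) ?_ ?_ ?_ ?_ ?_).symm
    · intro q hq
      simp only [hP, Finset.mem_filter, Finset.mem_univ, true_and] at hq ⊢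
      have hne : τ q.1 ≠ τ q.2 := fun h => hq.ne (τ.injective h)
      rcases lt_or_gt_of_ne hne with h | h
      · simp [h]
      · simp [not_lt.2 h.le, h]
    · intro p hp
      simp only [hP, Finset.mem_filter, Finset.mem_univ, true_and] at hp ⊢
      have hne : τ.symm p.1 ≠ τ.symm p.2 := fun h => hp.ne (τ.symm.injective h)
      rcases lt_or_gt_of_ne hne with h | h
      · simp [h]
      · simp [not_lt.2 h.le, h]
    · intro q hq
      simp only [hP, Finset.mem_filter, Finset.mem_univ, true_and] at hq
      by_cases h : τ q.1 < τ q.2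
      · simp [h, hq, Equiv.symm_apply_apply, not_lt.2 h.le]
      · simp only [h, if_false, Equiv.symm_apply_apply]
        simp [not_lt.2 (le_of_lt hq), hq]
    · intro p hp
      simp only [hP, Finset.mem_filter, Finset.mem_univ, true_and] at hp
      by_cases h : τ.symm p.1 < τ.symm p.2
      · simp [h, Equiv.apply_symm_apply, hp]
      · simp only [h, if_false, Equiv.apply_symm_apply]
        simp [not_lt.2 (le_of_lt hp), hp]
    · intro q hq
      by_cases h : τ q.1 < τ q.2 <;> simp [h]
  rw [hmid, ← Finset.prod_mul_distrib]
  refine Finset.prod_congr rfl ?_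
  intro q hq
  simp only [hP, Finset.mem_filter, Finset.mem_univ, true_and] at hq
  simp only [Equiv.Perm.mul_apply, Function.comp_apply]
  have hne : σ (τ q.1) ≠ σ (τ q.2) := fun h => hq.ne (τ.injective (σ.injective h))
  by_cases ht : τ q.1 < τ q.2
  · simp [ht, not_lt.2 ht.le]; exact if_congr Iff.rfl rfl rfl
  · have ht' : τ q.2 < τ q.1 := by
      rcases lt_or_gt_of_ne (fun h => hq.ne (τ.injective h) : τ q.1 ≠ τ q.2) with h | h
      · exact absurd h ht
      · exact h
    simp only [ht, if_false, ht', if_true]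
    rcases lt_or_gt_of_ne hne with h | h
    · simp only [h, if_true, not_lt.2 h.le, if_false]
      have := hinv (θ (σ (τ q.1)) - θ (σ (τ q.2)))
      rw [neg_sub] at this
      rw [mul_comm] at this
      rw [this]
    · simp [h, not_lt.2 h.le]

lemma zdag_sym (S : ℝ → ℂ) (hinv : ∀ θ : ℝ, S θ * S (-θ) = 1)
    (n : ℕ) (f : ℝ → ℂ) (ψ : (Fin n → ℝ) → ℂ)
    (σ : Equiv.Perm (Fin (n + 1))) (θ : Fin (n + 1) → ℝ) :
    zdag S n f ψ θ = Sperm S σ θ * zdag S n f ψ (θ ∘ σ) := by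
  unfold zdag
  have key : (∑ π : Equiv.Perm (Fin (n + 1)),
        Sperm S π θ * (f (θ (π 0)) * ψ fun i => θ (π i.succ)))
      = Sperm S σ θ * ∑ π : Equiv.Perm (Fin (n + 1)),
        Sperm S π (θ ∘ σ) * (f ((θ ∘ σ) (π 0)) * ψ fun i => (θ ∘ σ) (π i.succ)) := by
    rw [Finset.mul_sum]
    refine Fintype.sum_equiv (Equiv.mulLeft σ⁻¹)
      (fun π => Sperm S π θ * (f (θ (π 0)) * ψ fun i => θ (π i.succ)))
      (fun π => Sperm S σ θ * (Sperm S π (θ ∘ σ) *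
        (f ((θ ∘ σ) (π 0)) * ψ fun i => (θ ∘ σ) (π i.succ)))) (fun π => ?_)
    have he : (Equiv.mulLeft σ⁻¹) π = σ⁻¹ * π := rfl
    rw [he]
    have hconv : ∀ j : Fin (n + 1), (θ ∘ σ) ((σ⁻¹ * π) j) = θ (π j) := by
      intro j
      simp [Equiv.Perm.mul_apply]
    simp only [hconv]
    rw [← mul_assoc (Sperm S σ θ), ← sperm_cocycle S hinv, mul_inv_cancel_left]
  rw [key, mul_left_comm]

open ENNReal in
lemma key_lintegral {n : ℕ} (G : ℝ → ℝ≥0∞) (H : (Fin n → ℝ) → ℝ≥0∞)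
    (hG : AEMeasurable G volume) (hH : AEMeasurable H volume)
    (σ : Equiv.Perm (Fin (n + 1))) :
    ∫⁻ θ : Fin (n + 1) → ℝ, G (θ (σ 0)) * H (fun i => θ (σ i.succ)) ∂volume
      = (∫⁻ t, G t ∂volume) * ∫⁻ η : Fin n → ℝ, H η ∂volume := by
  classical
  set e₁ : (Fin (n + 1) → ℝ) ≃ᵐ (Fin (n + 1) → ℝ) :=
    MeasurableEquiv.piCongrLeft (fun _ => ℝ) (σ⁻¹ : Equiv.Perm (Fin (n + 1))) with he₁
  set e₂ : (Fin (n + 1) → ℝ) ≃ᵐ ℝ × (Fin n → ℝ) :=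
    MeasurableEquiv.piFinSuccAbove (fun _ => ℝ) 0 with he₂
  have he₁app : ∀ θ : Fin (n + 1) → ℝ, e₁ θ = fun j => θ (σ j) := by
    intro θ
    funext j
    simp [he₁, MeasurableEquiv.coe_piCongrLeft, Equiv.piCongrLeft_apply, eq_rec_constant]
    rfl
  have he₂app : ∀ θ : Fin (n + 1) → ℝ, e₂ θ = (θ 0, fun j => θ j.succ) := by
    intro θ
    rw [he₂]
    simp [MeasurableEquiv.piFinSuccAbove, Fin.removeNth, Fin.zero_succAbove]
    rfl
  have h1 : MeasurePreserving e₁ volume volume :=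
    volume_measurePreserving_piCongrLeft _ _
  have h2 : MeasurePreserving e₂ volume volume :=
    volume_preserving_piFinSuccAbove _ 0
  have hE : MeasurePreserving (⇑(e₁.trans e₂)) volume volume := h2.comp h1
  have hmap := hE.lintegral_map_equiv (fun z : ℝ × (Fin n → ℝ) => G z.1 * H z.2) (e₁.trans e₂)
  have hpt : ∀ θ : Fin (n + 1) → ℝ,
      (fun z : ℝ × (Fin n → ℝ) => G z.1 * H z.2) ((e₁.trans e₂) θ)
        = G (θ (σ 0)) * H (fun i => θ (σ i.succ)) := by
    intro θ
    have : (e₁.trans e₂) θ = e₂ (e₁ θ) := rfl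
    rw [this, he₁app, he₂app]
  rw [show (fun θ : Fin (n + 1) → ℝ => G (θ (σ 0)) * H (fun i => θ (σ i.succ)))
      = fun θ => (fun z : ℝ × (Fin n → ℝ) => G z.1 * H z.2) ((e₁.trans e₂) θ) from
    (funext hpt).symm]
  rw [← hmap, MeasureTheory.Measure.volume_eq_prod]
  exact MeasureTheory.lintegral_prod_mul hG hH

open ENNReal in
lemma eLpNorm_two_eq {α : Type*} [MeasurableSpace α] {μ : MeasureTheory.Measure α}
    {E : Type*} [NormedAddCommGroup E] (u : α → E) :
    eLpNorm u 2 μ = (∫⁻ x, ((‖u x‖₊ : ℝ≥0∞)) ^ (2 : ℕ) ∂μ) ^ (1/2 : ℝ) := by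
  rw [eLpNorm_eq_lintegral_rpow_enorm_toReal two_ne_zero ENNReal.ofNat_ne_top]
  simp only [ENNReal.toReal_ofNat]
  congr 1
  refine lintegral_congr fun x => ?_
  rw [← ENNReal.rpow_natCast]
  norm_num; rfl

open ENNReal in
lemma key_eLpNorm {𝕜 : Type*} [RCLike 𝕜] {n : ℕ} (g : ℝ → 𝕜) (h : (Fin n → ℝ) → 𝕜)
    (hg : AEStronglyMeasurable g volume) (hh : AEStronglyMeasurable h volume)
    (σ : Equiv.Perm (Fin (n + 1))) :
    eLpNorm (fun θ : Fin (n + 1) → ℝ => g (θ (σ 0)) * h (fun i => θ (σ i.succ))) 2 volume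
      = eLpNorm g 2 volume * eLpNorm h 2 volume := by
  rw [eLpNorm_two_eq, eLpNorm_two_eq, eLpNorm_two_eq]
  have hpt : ∀ θ : Fin (n + 1) → ℝ,
      ((‖g (θ (σ 0)) * h (fun i => θ (σ i.succ))‖₊ : ℝ≥0∞)) ^ (2 : ℕ)
        = (fun t => ((‖g t‖₊ : ℝ≥0∞)) ^ (2 : ℕ)) (θ (σ 0))
          * (fun η => ((‖h η‖₊ : ℝ≥0∞)) ^ (2 : ℕ)) (fun i => θ (σ i.succ)) := by
    intro θ
    simp [nnnorm_mul, ENNReal.coe_mul, mul_pow]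
  rw [show (fun θ : Fin (n + 1) → ℝ =>
      ((‖g (θ (σ 0)) * h (fun i => θ (σ i.succ))‖₊ : ℝ≥0∞)) ^ (2 : ℕ))
      = fun θ : Fin (n + 1) → ℝ =>
        (fun t => ((‖g t‖₊ : ℝ≥0∞)) ^ (2 : ℕ)) (θ (σ 0))
          * (fun η => ((‖h η‖₊ : ℝ≥0∞)) ^ (2 : ℕ)) (fun i => θ (σ i.succ)) from funext hpt]
  rw [key_lintegral (fun t => ((‖g t‖₊ : ℝ≥0∞)) ^ (2 : ℕ)) (fun η => ((‖h η‖₊ : ℝ≥0∞)) ^ (2 : ℕ)) (hg.enorm.pow_const 2) (hh.enorm.pow_const 2) σ]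
  rw [ENNReal.mul_rpow_of_nonneg _ _ (by norm_num : (0:ℝ) ≤ 1/2)]

lemma measurePreserving_pair {n : ℕ} (σ : Equiv.Perm (Fin (n + 1))) :
    MeasurePreserving (fun θ : Fin (n + 1) → ℝ =>
      ((θ (σ 0), fun i => θ (σ i.succ)) : ℝ × (Fin n → ℝ))) volume volume := by
  classical
  set e₁ : (Fin (n + 1) → ℝ) ≃ᵐ (Fin (n + 1) → ℝ) :=
    MeasurableEquiv.piCongrLeft (fun _ => ℝ) (σ⁻¹ : Equiv.Perm (Fin (n + 1))) with he₁
  set e₂ : (Fin (n + 1) → ℝ) ≃ᵐ ℝ × (Fin n → ℝ) :=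
    MeasurableEquiv.piFinSuccAbove (fun _ => ℝ) 0 with he₂
  have he₁app : ∀ θ : Fin (n + 1) → ℝ, e₁ θ = fun j => θ (σ j) := by
    intro θ
    funext j
    simp [he₁, MeasurableEquiv.coe_piCongrLeft, Equiv.piCongrLeft_apply, eq_rec_constant]
    rfl
  have he₂app : ∀ θ : Fin (n + 1) → ℝ, e₂ θ = (θ 0, fun j => θ j.succ) := by
    intro θ
    rw [he₂]
    simp [MeasurableEquiv.piFinSuccAbove, Fin.removeNth, Fin.zero_succAbove]
    rfl
  have h1 : MeasurePreserving e₁ volume volume :=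
    volume_measurePreserving_piCongrLeft _ _
  have h2 : MeasurePreserving e₂ volume volume :=
    volume_preserving_piFinSuccAbove _ 0
  have hE : MeasurePreserving (⇑(e₁.trans e₂)) volume volume := h2.comp h1
  have : ⇑(e₁.trans e₂) = fun θ : Fin (n + 1) → ℝ =>
      ((θ (σ 0), fun i => θ (σ i.succ)) : ℝ × (Fin n → ℝ)) := by
    funext θ
    show e₂ (e₁ θ) = _
    rw [he₁app, he₂app]
  rwa [this] at hE

lemma aesm_pair {𝕜 : Type*} [RCLike 𝕜] {n : ℕ} (g : ℝ → 𝕜) (h : (Fin n → ℝ) → 𝕜)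
    (hg : AEStronglyMeasurable g volume) (hh : AEStronglyMeasurable h volume)
    (σ : Equiv.Perm (Fin (n + 1))) :
    AEStronglyMeasurable
      (fun θ : Fin (n + 1) → ℝ => g (θ (σ 0)) * h (fun i => θ (σ i.succ))) volume := by
  have hz : AEStronglyMeasurable (fun z : ℝ × (Fin n → ℝ) => g z.1 * h z.2) volume := by
    rw [MeasureTheory.Measure.volume_eq_prod]
    exact (hg.comp_quasiMeasurePreserving MeasureTheory.Measure.quasiMeasurePreserving_fst).mul
      (hh.comp_quasiMeasurePreserving MeasureTheory.Measure.quasiMeasurePreserving_snd)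
  exact hz.comp_quasiMeasurePreserving (measurePreserving_pair σ).quasiMeasurePreserving

lemma Snorm_one (S : ℝ → ℂ) (hinv : ∀ θ : ℝ, S θ * S (-θ) = 1)
    (hconj : ∀ θ : ℝ, S (-θ) = (starRingEnd ℂ) (S θ)) (x : ℝ) : ‖S x‖ = 1 := by
  have h : S x * (starRingEnd ℂ) (S x) = 1 := by rw [← hconj]; exact hinv x
  rw [Complex.mul_conj] at h
  have h2 : Complex.normSq (S x) = 1 := by exact_mod_cast h
  have h3 : ‖S x‖ ^ 2 = 1 := by
    rw [Complex.normSq_eq_norm_sq] at h2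
    exact h2
  nlinarith [norm_nonneg (S x)]

lemma sperm_norm_one (S : ℝ → ℂ) (hinv : ∀ θ : ℝ, S θ * S (-θ) = 1)
    (hconj : ∀ θ : ℝ, S (-θ) = (starRingEnd ℂ) (S θ)) {m : ℕ}
    (σ : Equiv.Perm (Fin m)) (θ : Fin m → ℝ) : ‖Sperm S σ θ‖ = 1 := by
  unfold Sperm
  rw [norm_prod]
  exact Finset.prod_eq_one fun p _ => Snorm_one S hinv hconj _

lemma sperm_continuous (S : ℝ → ℂ) (hS : Continuous S) {m : ℕ} (σ : Equiv.Perm (Fin m)) :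
    Continuous (Sperm S σ) := by
  unfold Sperm
  refine continuous_finset_prod _ fun p _ => hS.comp ?_
  exact (continuous_apply _).sub (continuous_apply _)

lemma energyE_continuous {m : ℕ} : Continuous (energyE (n := m)) :=
  continuous_finset_sum _ fun i _ => Real.continuous_cosh.comp (continuous_apply i)

lemma energyE_nonneg {m : ℕ} (θ : Fin m → ℝ) : 0 ≤ energyE θ :=
  Finset.sum_nonneg fun i _ => (Real.cosh_pos (θ i)).le

lemma energyE_split {n : ℕ} (σ : Equiv.Perm (Fin (n + 1))) (θ : Fin (n + 1) → ℝ) :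
    energyE θ = Real.cosh (θ (σ 0)) + energyE (fun i => θ (σ i.succ)) := by
  unfold energyE
  rw [← Equiv.sum_comp σ (fun j => Real.cosh (θ j)), Fin.sum_univ_succ]

lemma assemble {n : ℕ} (T : Equiv.Perm (Fin (n + 1)) → (Fin (n + 1) → ℝ) → ℂ)
    (hT : ∀ σ, AEStronglyMeasurable (T σ) volume)
    (B : ℝ≥0∞) (hTB : ∀ σ, eLpNorm (T σ) 2 volume ≤ B) :
    eLpNorm (fun θ => (Real.sqrt (n + 1) : ℂ) * ((Nat.factorial (n + 1) : ℂ))⁻¹ *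
        ∑ σ : Equiv.Perm (Fin (n + 1)), T σ θ) 2 volume
      ≤ ENNReal.ofReal (Real.sqrt (n + 1)) * B := by
  set c : ℂ := (Real.sqrt (n + 1) : ℂ) * ((Nat.factorial (n + 1) : ℂ))⁻¹ with hc
  have h1 : (fun θ => c * ∑ σ : Equiv.Perm (Fin (n + 1)), T σ θ)
      = c • (∑ σ : Equiv.Perm (Fin (n + 1)), T σ) := by
    funext θ
    simp [Finset.sum_apply]
  rw [h1, eLpNorm_const_smul]
  have h2 : eLpNorm (∑ σ : Equiv.Perm (Fin (n + 1)), T σ) 2 volume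
      ≤ ∑ σ : Equiv.Perm (Fin (n + 1)), eLpNorm (T σ) 2 volume :=
    eLpNorm_sum_le (fun σ _ => hT σ) (by norm_num)
  have h3 : (∑ σ : Equiv.Perm (Fin (n + 1)), eLpNorm (T σ) 2 volume)
      ≤ ((Nat.factorial (n + 1) : ℝ≥0∞)) * B := by
    calc (∑ σ : Equiv.Perm (Fin (n + 1)), eLpNorm (T σ) 2 volume)
        ≤ ∑ _σ : Equiv.Perm (Fin (n + 1)), B := Finset.sum_le_sum fun σ _ => hTB σ
      _ = (Fintype.card (Equiv.Perm (Fin (n + 1)))) • B := by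
          rw [Finset.sum_const, Finset.card_univ]
      _ = ((Nat.factorial (n + 1) : ℝ≥0∞)) * B := by
          rw [Fintype.card_perm, Fintype.card_fin, nsmul_eq_mul]
  have hcn : ‖c‖ = Real.sqrt (n + 1) * ((Nat.factorial (n + 1) : ℝ))⁻¹ := by
    rw [hc, norm_mul, norm_inv]
    congr 1
    · rw [Complex.norm_real]
      exact Real.norm_of_nonneg (Real.sqrt_nonneg _)
    · rw [Complex.norm_natCast]
  have hcoe : (‖c‖₊ : ℝ≥0∞)
      = ENNReal.ofReal (Real.sqrt (n + 1)) * ((Nat.factorial (n + 1) : ℝ≥0∞))⁻¹ := by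
    rw [← enorm_eq_nnnorm, ← ofReal_norm, hcn, ENNReal.ofReal_mul (Real.sqrt_nonneg _)]
    congr 1
    rw [ENNReal.ofReal_inv_of_pos (by positivity), ENNReal.ofReal_natCast]
  have hb0 : ((Nat.factorial (n + 1) : ℝ≥0∞)) ≠ 0 := by
    simp [Nat.factorial_ne_zero]
  have hbt : ((Nat.factorial (n + 1) : ℝ≥0∞)) ≠ ⊤ := by simp
  calc (‖c‖₊ : ℝ≥0∞) * eLpNorm (∑ σ : Equiv.Perm (Fin (n + 1)), T σ) 2 volume
      ≤ (‖c‖₊ : ℝ≥0∞) * (((Nat.factorial (n + 1) : ℝ≥0∞)) * B) :=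
        mul_le_mul_right (h2.trans h3) _
    _ = ENNReal.ofReal (Real.sqrt (n + 1)) * B * (((Nat.factorial (n + 1) : ℝ≥0∞))⁻¹ *
          ((Nat.factorial (n + 1) : ℝ≥0∞))) := by rw [hcoe]; ring
    _ = ENNReal.ofReal (Real.sqrt (n + 1)) * B := by
        rw [ENNReal.inv_mul_cancel hb0 hbt, mul_one]


/-- On the S-symmetric Fock space, `z†(f)` maps the `n`-particle subspace into the S-symmetric
`(n+1)`-particle subspace with `‖z†(f)ψ‖ ≤ √(n+1)‖f‖₂‖ψ‖`, and with an energy-damped weight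
`‖e^{ω(H/μ)} z†(f) e^{-ω(H/μ)} ψ‖ ≤ √(n+1)·‖e^{ω(E(·))}f‖₂·‖ψ‖` for a monotone subadditive
indicatrix `ω`. -/
theorem stmt10 (S : ℝ → ℂ) (hsmooth : ContDiff ℝ (⊤ : ℕ∞) S)
    (hinv : ∀ θ : ℝ, S θ * S (-θ) = 1)
    (hconj : ∀ θ : ℝ, S (-θ) = (starRingEnd ℂ) (S θ))
    (n : ℕ) (f : ℝ → ℂ) (ψ : (Fin n → ℝ) → ℂ)
    (hf : MemLp f 2 volume) (hψ : MemLp ψ 2 volume)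
    (hψsym : ∀ (σ : Equiv.Perm (Fin n)) (θ : Fin n → ℝ), ψ θ = Sperm S σ θ * ψ (θ ∘ σ))
    (ω : ℝ → ℝ) (hωpos : ∀ p : ℝ, 0 ≤ p → 0 ≤ ω p)
    (hωmono : ∀ p q : ℝ, 0 ≤ p → p ≤ q → ω p ≤ ω q)
    (hωsub : ∀ p q : ℝ, 0 ≤ p → 0 ≤ q → ω (p + q) ≤ ω p + ω q) :
    (∀ (σ : Equiv.Perm (Fin (n + 1))) (θ : Fin (n + 1) → ℝ),
        zdag S n f ψ θ = Sperm S σ θ * zdag S n f ψ (θ ∘ σ)) ∧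
    (eLpNorm (zdag S n f ψ) 2 volume ≤
        ENNReal.ofReal (Real.sqrt (n + 1)) * eLpNorm f 2 volume * eLpNorm ψ 2 volume) ∧
    (eLpNorm (fun θ : Fin (n + 1) → ℝ =>
          (Real.exp (ω (energyE θ)) : ℂ) *
            zdag S n f (fun η => (Real.exp (-ω (energyE η)) : ℂ) * ψ η) θ) 2 volume ≤
        ENNReal.ofReal (Real.sqrt (n + 1)) *
          eLpNorm (fun t : ℝ => (Real.exp (ω (Real.cosh t)) : ℂ) * f t) 2 volume *
          eLpNorm ψ 2 volume) := by
  have hScont : Continuous S := hsmooth.continuous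
  -- measurability of ω-composites
  have hω'mono : Monotone (fun x : ℝ => ω (max x 0)) := fun a b hab =>
    hωmono _ _ (le_max_right _ _) (max_le_max hab le_rfl)
  have hω'meas : Measurable (fun x : ℝ => ω (max x 0)) := hω'mono.measurable
  have hωcomp : ∀ {k : ℕ} (u : (Fin k → ℝ) → ℝ), Continuous u → (∀ x, 0 ≤ u x) →
      Measurable (fun x : Fin k → ℝ => ω (u x)) := by
    intro k u hu hupos
    have : (fun x : Fin k → ℝ => ω (u x)) = fun x => ω (max (u x) 0) := by
      funext x; rw [max_eq_left (hupos x)]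
    rw [this]
    exact hω'meas.comp hu.measurable
  have hωEmeas : ∀ {k : ℕ}, Measurable (fun θ : Fin k → ℝ => ω (energyE θ)) :=
    fun {k} => hωcomp energyE energyE_continuous energyE_nonneg
  have hωcoshmeas : Measurable (fun t : ℝ => ω (Real.cosh t)) := by
    have : (fun t : ℝ => ω (Real.cosh t)) = fun t => ω (max (Real.cosh t) 0) := by
      funext t; rw [max_eq_left (Real.cosh_pos t).le]
    rw [this]
    exact hω'meas.comp Real.continuous_cosh.measurable
  refine ⟨zdag_sym S hinv n f ψ, ?_, ?_⟩
  · -- unweighted bound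
    have hzd : zdag S n f ψ = fun θ =>
        (Real.sqrt (n + 1) : ℂ) * ((Nat.factorial (n + 1) : ℂ))⁻¹ *
          ∑ σ : Equiv.Perm (Fin (n + 1)),
            (fun σ (θ : Fin (n + 1) → ℝ) =>
              Sperm S σ θ * (f (θ (σ 0)) * ψ (fun i => θ (σ i.succ)))) σ θ := rfl
    rw [hzd, mul_assoc]
    refine assemble _ ?_ _ ?_
    · intro σ
      exact ((sperm_continuous S hScont σ).aestronglyMeasurable).mul
        (aesm_pair f ψ hf.1 hψ.1 σ)
    · intro σ
      refine le_of_eq ?_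
      calc eLpNorm (fun θ : Fin (n + 1) → ℝ =>
              Sperm S σ θ * (f (θ (σ 0)) * ψ (fun i => θ (σ i.succ)))) 2 volume
          = eLpNorm (fun θ : Fin (n + 1) → ℝ =>
              ‖Sperm S σ θ * (f (θ (σ 0)) * ψ (fun i => θ (σ i.succ)))‖) 2 volume :=
            (eLpNorm_norm _).symm
        _ = eLpNorm (fun θ : Fin (n + 1) → ℝ =>
              (fun t => ‖f t‖) (θ (σ 0)) * (fun η => ‖ψ η‖) (fun i => θ (σ i.succ))) 2 volume := by
            congr 1
            funext θ
            simp [norm_mul, sperm_norm_one S hinv hconj]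
        _ = eLpNorm (fun t => ‖f t‖) 2 volume * eLpNorm (fun η : Fin n → ℝ => ‖ψ η‖) 2 volume :=
            key_eLpNorm _ _ hf.1.norm hψ.1.norm σ
        _ = eLpNorm f 2 volume * eLpNorm ψ 2 volume := by rw [eLpNorm_norm, eLpNorm_norm]
  · -- weighted bound
    set ψ' : (Fin n → ℝ) → ℂ := fun η => (Real.exp (-ω (energyE η)) : ℂ) * ψ η with hψ'
    set f' : ℝ → ℂ := fun t => (Real.exp (ω (Real.cosh t)) : ℂ) * f t with hf'
    have hψ'aesm : AEStronglyMeasurable ψ' volume := by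
      refine (Measurable.aestronglyMeasurable ?_).mul hψ.1
      exact Complex.measurable_ofReal.comp (Real.measurable_exp.comp hωEmeas.neg)
    have hf'aesm : AEStronglyMeasurable f' volume := by
      refine (Measurable.aestronglyMeasurable ?_).mul hf.1
      exact Complex.measurable_ofReal.comp (Real.measurable_exp.comp hωcoshmeas)
    have hform : (fun θ : Fin (n + 1) → ℝ =>
          (Real.exp (ω (energyE θ)) : ℂ) * zdag S n f ψ' θ)
        = fun θ => (Real.sqrt (n + 1) : ℂ) * ((Nat.factorial (n + 1) : ℂ))⁻¹ *
            ∑ σ : Equiv.Perm (Fin (n + 1)),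
              (Real.exp (ω (energyE θ)) : ℂ) *
                (Sperm S σ θ * (f (θ (σ 0)) * ψ' (fun i => θ (σ i.succ)))) := by
      funext θ
      show (Real.exp (ω (energyE θ)) : ℂ) *
          ((Real.sqrt (n + 1) : ℂ) * ((Nat.factorial (n + 1) : ℂ))⁻¹ *
            ∑ σ : Equiv.Perm (Fin (n + 1)),
              Sperm S σ θ * (f (θ (σ 0)) * ψ' (fun i => θ (σ i.succ)))) = _
      rw [mul_left_comm, Finset.mul_sum]
    rw [hform, mul_assoc]
    refine assemble (fun σ θ => (Real.exp (ω (energyE θ)) : ℂ) *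
        (Sperm S σ θ * (f (θ (σ 0)) * ψ' (fun i => θ (σ i.succ))))) ?_ _ ?_
    · intro σ
      refine (Measurable.aestronglyMeasurable ?_).mul
        (((sperm_continuous S hScont σ).aestronglyMeasurable).mul
          (aesm_pair f ψ' hf.1 hψ'aesm σ))
      exact Complex.measurable_ofReal.comp (Real.measurable_exp.comp hωEmeas)
    · intro σ
      have hpt : ∀ θ : Fin (n + 1) → ℝ,
          ‖(Real.exp (ω (energyE θ)) : ℂ) *
            (Sperm S σ θ * (f (θ (σ 0)) * ψ' (fun i => θ (σ i.succ))))‖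
          ≤ (fun t => ‖f' t‖) (θ (σ 0)) * (fun η : Fin n → ℝ => ‖ψ η‖)
              (fun i => θ (σ i.succ)) := by
        intro θ
        have hsplit : energyE θ
            = Real.cosh (θ (σ 0)) + energyE (fun i => θ (σ i.succ)) := energyE_split σ θ
        have hωle : ω (energyE θ) - ω (energyE (fun i => θ (σ i.succ)))
            ≤ ω (Real.cosh (θ (σ 0))) := by
          have h1 := hωsub (Real.cosh (θ (σ 0))) (energyE (fun i => θ (σ i.succ)))
            (Real.cosh_pos _).le (energyE_nonneg _)
          rw [hsplit]
          linarith
        have hLnorm : ‖(Real.exp (ω (energyE θ)) : ℂ) *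
              (Sperm S σ θ * (f (θ (σ 0)) * ψ' (fun i => θ (σ i.succ))))‖
            = Real.exp (ω (energyE θ) - ω (energyE (fun i => θ (σ i.succ)))) *
              (‖f (θ (σ 0))‖ * ‖ψ (fun i => θ (σ i.succ))‖) := by
          simp only [hψ', norm_mul, Complex.norm_real, Real.norm_eq_abs, Real.abs_exp,
            sperm_norm_one S hinv hconj, one_mul, Real.exp_sub, Real.exp_neg, abs_inv]
          field_simp [Real.exp_ne_zero]
        have hRnorm : (fun t => ‖f' t‖) (θ (σ 0))
            = Real.exp (ω (Real.cosh (θ (σ 0)))) * ‖f (θ (σ 0))‖ := by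
          simp [hf', norm_mul, Complex.norm_real, Real.norm_eq_abs, Real.abs_exp]
        rw [hLnorm, hRnorm]
        have := Real.exp_le_exp.2 hωle
        calc Real.exp (ω (energyE θ) - ω (energyE (fun i => θ (σ i.succ)))) *
              (‖f (θ (σ 0))‖ * ‖ψ (fun i => θ (σ i.succ))‖)
            ≤ Real.exp (ω (Real.cosh (θ (σ 0)))) *
              (‖f (θ (σ 0))‖ * ‖ψ (fun i => θ (σ i.succ))‖) := by
              exact mul_le_mul_of_nonneg_right this (by positivity)
          _ = Real.exp (ω (Real.cosh (θ (σ 0)))) * ‖f (θ (σ 0))‖ *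
              ‖ψ (fun i => θ (σ i.succ))‖ := by ring
      calc eLpNorm (fun θ : Fin (n + 1) → ℝ => (Real.exp (ω (energyE θ)) : ℂ) *
              (Sperm S σ θ * (f (θ (σ 0)) * ψ' (fun i => θ (σ i.succ))))) 2 volume
          ≤ eLpNorm (fun θ : Fin (n + 1) → ℝ =>
              (fun t => ‖f' t‖) (θ (σ 0)) * (fun η : Fin n → ℝ => ‖ψ η‖)
                (fun i => θ (σ i.succ))) 2 volume := eLpNorm_mono_real hpt
        _ = eLpNorm (fun t => ‖f' t‖) 2 volume *
              eLpNorm (fun η : Fin n → ℝ => ‖ψ η‖) 2 volume :=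
            key_eLpNorm _ _ hf'aesm.norm hψ.1.norm σ
        _ = eLpNorm f' 2 volume * eLpNorm ψ 2 volume := by rw [eLpNorm_norm, eLpNorm_norm]
end

section
/- For a contraction C = (m, n, {(l₁,r₁),…,(l_k,r_k)}) the factor S_C satisfies δ_C(θ,η) S_C(θ,η) = δ_C(θ,η) S^σ(θ) S^ρ(η), where σ ∈ S_m is the permutation moving the contracted left indices l₁,…,l_k to the end (in order) and ρ is the permutation of {m+1,…,m+n} moving the contracted right indices r_k,…,r₁ to the front. -/
open scoped BigOperators

/-- A contraction `C ∈ 𝒞_{m,n}`: a finite set of `k` pairs of contracted indices, the left one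
among the first `m` variables, the right one among the last `n` variables (0-indexed). -/
structure Contraction (m n : ℕ) where
  k : ℕ
  l : Fin k → Fin m
  r : Fin k → Fin n

/-- The combined variable `ξ = (θ, η) ∈ ℝ^{m+n}`, indexed by naturals (junk value `0` outside). -/
noncomputable def xivec {m n : ℕ} (θ : Fin m → ℝ) (η : Fin n → ℝ) : ℕ → ℝ :=
  fun i => if h : i < m then θ ⟨i, h⟩ else if h' : i - m < n then η ⟨i - m, h'⟩ else 0

/-- `S^{(m)}_{a,b}`: equals `S(ξ_b - ξ_a)` if exactly one of `a, b` lies among the first `m`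
indices, and `S(ξ_a - ξ_b)` otherwise. -/
noncomputable def Smod (S : ℝ → ℂ) (m : ℕ) (ξ : ℕ → ℝ) (a b : ℕ) : ℂ :=
  if (a < m ∧ ¬ b < m) ∨ (b < m ∧ ¬ a < m) then S (ξ b - ξ a) else S (ξ a - ξ b)

/-- `S_C(θ,η) = (∏_j ∏_{p=l_j+1}^{r_j-1} S^{(m)}_{p,l_j}) · ∏_{r_i<r_j, l_i<l_j} S^{(m)}_{l_j,r_i}`,
with combined indices so that the right index `r_i` sits at position `m + r_i`. -/
noncomputable def SC (S : ℝ → ℂ) {m n : ℕ} (C : Contraction m n)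
    (θ : Fin m → ℝ) (η : Fin n → ℝ) : ℂ :=
  (∏ j : Fin C.k, ∏ p ∈ Finset.Ico ((C.l j : ℕ) + 1) (m + (C.r j : ℕ)),
      Smod S m (xivec θ η) p (C.l j)) *
  ∏ j : Fin C.k, ∏ i : Fin C.k,
    if (C.r i : ℕ) < (C.r j : ℕ) ∧ (C.l i : ℕ) < (C.l j : ℕ) then
      Smod S m (xivec θ η) (C.l j) (m + (C.r i : ℕ)) else 1

/-- `R_C(θ,η) = ∏_j (1 - ∏_{p=1}^{m+n} S^{(m)}_{l_j,p})`. -/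
noncomputable def RC (S : ℝ → ℂ) {m n : ℕ} (C : Contraction m n)
    (θ : Fin m → ℝ) (η : Fin n → ℝ) : ℂ :=
  ∏ j : Fin C.k, (1 - ∏ p ∈ Finset.range (m + n), Smod S m (xivec θ η) (C.l j) p)

/- ### Auxiliary machinery -/

section Aux

lemma hprod_Ico_fin (g : ℕ → ℂ) (a m : ℕ) :
    ∏ p ∈ Finset.Ico a m, g p = ∏ v : Fin m, if a ≤ (v : ℕ) then g v else 1 := by
  rw [Fin.prod_univ_eq_prod_range (fun p => if a ≤ p then g p else 1) m, ← Finset.prod_filter]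
  apply Finset.prod_congr _ (fun _ _ => rfl)
  ext x; simp only [Finset.mem_Ico, Finset.mem_filter, Finset.mem_range]; omega

lemma hprod_range_fin (g : ℕ → ℂ) (b n : ℕ) (hb : b ≤ n) :
    ∏ p ∈ Finset.range b, g p = ∏ w : Fin n, if (w : ℕ) < b then g w else 1 := by
  rw [Fin.prod_univ_eq_prod_range (fun p => if p < b then g p else 1) n, ← Finset.prod_filter]
  apply Finset.prod_congr _ (fun _ _ => rfl)
  ext x; simp only [Finset.mem_filter, Finset.mem_range]; omega

lemma prod_orderIsoOfFin {α : Type*} [LinearOrder α] (s : Finset α) {c : ℕ} (hc : s.card = c)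
    (h : α → ℂ) : ∏ i : Fin c, h ((s.orderIsoOfFin hc i : α)) = ∏ v ∈ s, h v := by
  rw [← Finset.prod_coe_sort s h]
  exact Equiv.prod_comp (s.orderIsoOfFin hc).toEquiv (fun v => h ↑v)

lemma prod_pairs_symm {k : ℕ} (F : Fin k → Fin k → ℂ) (hdiag : ∀ i, F i i = 1) :
    (∏ i, ∏ j, F i j) =
      ∏ p ∈ Finset.univ.filter (fun p : Fin k × Fin k => p.1 < p.2), (F p.1 p.2 * F p.2 p.1) := by
  classical
  rw [← Fintype.prod_prod_type' F]
  rw [← Finset.prod_filter_mul_prod_filter_not Finset.univ (fun p : Fin k × Fin k => p.1 < p.2)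
    (fun p => F p.1 p.2)]
  have key : ∏ p ∈ Finset.univ.filter (fun p : Fin k × Fin k => ¬ p.1 < p.2), F p.1 p.2
      = ∏ p ∈ Finset.univ.filter (fun p : Fin k × Fin k => p.1 < p.2), F p.2 p.1 := by
    rw [← Finset.prod_filter_mul_prod_filter_not
      (Finset.univ.filter (fun p : Fin k × Fin k => ¬ p.1 < p.2)) (fun p => p.2 < p.1)
      (fun p => F p.1 p.2)]
    have h1 : ∏ p ∈ (Finset.univ.filter (fun p : Fin k × Fin k => ¬ p.1 < p.2)).filter
        (fun p => ¬ p.2 < p.1), F p.1 p.2 = 1 := by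
      apply Finset.prod_eq_one
      intro p hp
      simp only [Finset.mem_filter, Finset.mem_univ, true_and] at hp
      have hp12 : p.1 = p.2 := le_antisymm (not_lt.mp hp.2) (not_lt.mp hp.1)
      rw [← hp12]; exact hdiag p.1
    rw [h1, mul_one]
    rw [Finset.filter_filter]
    have h2 : Finset.univ.filter (fun p : Fin k × Fin k => ¬ p.1 < p.2 ∧ p.2 < p.1)
        = Finset.univ.filter (fun p : Fin k × Fin k => p.2 < p.1) := by
      apply Finset.filter_congr; intro p _
      simp only [and_iff_right_iff_imp]
      exact fun h => not_lt.mpr h.le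
    rw [h2]
    apply Finset.prod_nbij' (fun p => Prod.swap p) (fun p => Prod.swap p) <;>
      simp [Finset.mem_filter]
  rw [key, ← Finset.prod_mul_distrib]

def eSplit (a b N : ℕ) (h : a + b = N) : Fin N ≃ Fin a ⊕ Fin b :=
  (finCongr h.symm).trans finSumFinEquiv.symm

lemma eSplit_symm_inl {a b N : ℕ} (h : a + b = N) (i : Fin a) :
    (((eSplit a b N h).symm (Sum.inl i) : Fin N) : ℕ) = (i : ℕ) := by
  simp [eSplit]

lemma eSplit_symm_inr {a b N : ℕ} (h : a + b = N) (j : Fin b) :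
    (((eSplit a b N h).symm (Sum.inr j) : Fin N) : ℕ) = a + (j : ℕ) := by
  simp [eSplit]

noncomputable def permOf {a b N : ℕ} (h : a + b = N) (g : Fin a ⊕ Fin b → Fin N)
    (hg : Function.Bijective g) : Equiv.Perm (Fin N) :=
  (eSplit a b N h).trans (Equiv.ofBijective g hg)

lemma permOf_symm_apply {a b N : ℕ} (h : a + b = N) (g : Fin a ⊕ Fin b → Fin N)
    (hg : Function.Bijective g) (q : Fin a ⊕ Fin b) :
    permOf h g hg ((eSplit a b N h).symm q) = g q := by
  simp [permOf]

lemma Sperm_permOf {a b N : ℕ} (S : ℝ → ℂ) (h : a + b = N) (g : Fin a ⊕ Fin b → Fin N)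
    (hg : Function.Bijective g) (θ : Fin N → ℝ) :
    Sperm S (permOf h g hg) θ =
      ((∏ i : Fin a, ∏ i' : Fin a, if i < i' ∧ g (Sum.inl i') < g (Sum.inl i) then
          S (θ (g (Sum.inl i)) - θ (g (Sum.inl i'))) else 1) *
      (∏ i : Fin a, ∏ j : Fin b, if g (Sum.inr j) < g (Sum.inl i) then
          S (θ (g (Sum.inl i)) - θ (g (Sum.inr j))) else 1)) *
      ∏ j : Fin b, ∏ j' : Fin b, if j < j' ∧ g (Sum.inr j') < g (Sum.inr j) then
          S (θ (g (Sum.inr j)) - θ (g (Sum.inr j'))) else 1 := by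
  classical
  have hσe : ∀ p : Fin N, permOf h g hg p = g (eSplit a b N h p) := fun p => rfl
  have heq : Sperm S (permOf h g hg) θ = ∏ x : Fin a ⊕ Fin b, ∏ y : Fin a ⊕ Fin b,
      (if (eSplit a b N h).symm x < (eSplit a b N h).symm y ∧ g y < g x then
        S (θ (g x) - θ (g y)) else 1) := by
    rw [Sperm, Finset.prod_filter, ← Fintype.prod_prod_type'
      (fun x y : Fin a ⊕ Fin b => if (eSplit a b N h).symm x < (eSplit a b N h).symm y ∧
        g y < g x then S (θ (g x) - θ (g y)) else 1)]
    rw [← Equiv.prod_comp ((eSplit a b N h).prodCongr (eSplit a b N h))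
      (fun q : (Fin a ⊕ Fin b) × (Fin a ⊕ Fin b) =>
        if (eSplit a b N h).symm q.1 < (eSplit a b N h).symm q.2 ∧ g q.2 < g q.1 then
          S (θ (g q.1) - θ (g q.2)) else 1)]
    apply Finset.prod_congr rfl
    intro p _
    simp [hσe]
  rw [heq]
  conv_lhs => rw [Fintype.prod_sum_type]
  congr 1
  · -- x = inl : gives ll-block times lr-block
    rw [← Finset.prod_mul_distrib]
    apply Finset.prod_congr rfl; intro i _
    conv_lhs => rw [Fintype.prod_sum_type]
    refine congrArg₂ (· * ·) ?_ ?_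
    · apply Finset.prod_congr rfl; intro i' _
      refine if_congr (and_congr_left' ?_) rfl rfl
      simp only [Fin.lt_def, eSplit_symm_inl]
    · apply Finset.prod_congr rfl; intro j _
      refine if_congr (and_iff_right ?_) rfl rfl
      rw [Fin.lt_def, eSplit_symm_inl, eSplit_symm_inr]
      have := i.isLt; omega
  · -- x = inr
    apply Finset.prod_congr rfl; intro j _
    conv_lhs => rw [Fintype.prod_sum_type]
    have h1 : (∏ i : Fin a, if (eSplit a b N h).symm (Sum.inr j) < (eSplit a b N h).symm (Sum.inl i)
        ∧ g (Sum.inl i) < g (Sum.inr j)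
        then S (θ (g (Sum.inr j)) - θ (g (Sum.inl i))) else 1) = 1 := by
      apply Finset.prod_eq_one; intro i _
      rw [if_neg]
      rintro ⟨h1, -⟩
      rw [Fin.lt_def, eSplit_symm_inr, eSplit_symm_inl] at h1
      have := i.isLt; omega
    rw [h1, one_mul]
    apply Finset.prod_congr rfl; intro j' _
    refine if_congr (and_congr_left' ?_) rfl rfl
    simp only [Fin.lt_def, eSplit_symm_inr]
    omega

/-- The order isomorphism enumerating the complement of the image of an injective map. -/
noncomputable def oIso {N k : ℕ} (l : Fin k → Fin N) (hl : Function.Injective l) :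
    Fin (N - k) ≃o ((Finset.univ.image l)ᶜ : Finset (Fin N)) :=
  (Finset.univ.image l)ᶜ.orderIsoOfFin
    (by rw [Finset.card_compl, Finset.card_image_of_injective _ hl]; simp)

lemma k_le_N {N k : ℕ} (l : Fin k → Fin N) (hl : Function.Injective l) : k ≤ N := by
  have := Fintype.card_le_of_injective l hl; simpa using this

lemma oIso_not_mem {N k : ℕ} (l : Fin k → Fin N) (hl : Function.Injective l)
    (i : Fin (N - k)) : ((oIso l hl i : Fin N)) ∉ Finset.univ.image l := by
  have := (oIso l hl i).2
  rwa [Finset.mem_compl] at this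

/-- left-permutation underlying map: free indices first (increasing), contracted at the end. -/
noncomputable def gLmap {N k : ℕ} (l : Fin k → Fin N) (hl : Function.Injective l) :
    Fin (N - k) ⊕ Fin k → Fin N :=
  Sum.elim (fun i => (oIso l hl i : Fin N)) l

/-- right-permutation underlying map: contracted indices first, free after (increasing). -/
noncomputable def gRmap {N k : ℕ} (l : Fin k → Fin N) (hl : Function.Injective l) :
    Fin k ⊕ Fin (N - k) → Fin N :=
  Sum.elim l (fun i => (oIso l hl i : Fin N))

lemma gLmap_bijective {N k : ℕ} (l : Fin k → Fin N) (hl : Function.Injective l) :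
    Function.Bijective (gLmap l hl) := by
  rw [Fintype.bijective_iff_injective_and_card]
  constructor
  · rintro (i|i) (i'|i') hq <;> simp only [gLmap, Sum.elim_inl, Sum.elim_inr] at hq
    · exact congrArg Sum.inl ((oIso l hl).injective (Subtype.coe_injective hq))
    · exact absurd (hq ▸ Finset.mem_image_of_mem l (Finset.mem_univ i'))
        (oIso_not_mem l hl i)
    · exact absurd (hq.symm ▸ Finset.mem_image_of_mem l (Finset.mem_univ i))
        (oIso_not_mem l hl i')
    · exact congrArg Sum.inr (hl hq)
  · have := k_le_N l hl
    simp; omega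

lemma gRmap_bijective {N k : ℕ} (l : Fin k → Fin N) (hl : Function.Injective l) :
    Function.Bijective (gRmap l hl) := by
  rw [Fintype.bijective_iff_injective_and_card]
  constructor
  · rintro (i|i) (i'|i') hq <;> simp only [gRmap, Sum.elim_inl, Sum.elim_inr] at hq
    · exact congrArg Sum.inl (hl hq)
    · exact absurd (hq.symm ▸ Finset.mem_image_of_mem l (Finset.mem_univ i))
        (oIso_not_mem l hl i')
    · exact absurd (hq ▸ Finset.mem_image_of_mem l (Finset.mem_univ i'))
        (oIso_not_mem l hl i)
    · exact congrArg Sum.inr ((oIso l hl).injective (Subtype.coe_injective hq))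
  · have := k_le_N l hl
    simp; omega

/-- order-reversal of `Fin k`. -/
def revF {k : ℕ} : Fin k → Fin k := fun j => ⟨k - 1 - (j : ℕ), by have := j.pos; omega⟩

lemma revF_invol {k : ℕ} : Function.Involutive (revF (k := k)) := by
  intro j; unfold revF; apply Fin.ext; simp; have := j.isLt; omega

lemma revF_inj {k : ℕ} : Function.Injective (revF (k := k)) :=
  Function.Involutive.injective revF_invol

lemma revF_lt_iff {k : ℕ} (a b : Fin k) : revF a < revF b ↔ b < a := by
  unfold revF; rw [Fin.lt_def, Fin.lt_def]; simp
  have := a.isLt; have := b.isLt; omega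

def revE {k : ℕ} : Equiv.Perm (Fin k) := Function.Involutive.toPerm _ (revF_invol (k := k))

lemma revE_apply {k : ℕ} (j : Fin k) : revE j = revF j := rfl

lemma prod_mem_ite {α : Type*} [Fintype α] [DecidableEq α] (s : Finset α) (P : α → Prop)
    [DecidablePred P] (f : α → ℂ) :
    (∏ v ∈ s, if P v then f v else 1) = ∏ v : α, if v ∈ s ∧ P v then f v else 1 := by
  rw [← Finset.prod_filter, ← Finset.prod_filter]
  apply Finset.prod_congr _ (fun _ _ => rfl)
  ext v; simp [Finset.mem_filter]

lemma prod_split_mem {α : Type*} [Fintype α] [DecidableEq α] (s : Finset α) (P : α → Prop)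
    [DecidablePred P] (f : α → ℂ) :
    (∏ v : α, if P v then f v else 1)
      = (∏ v : α, if v ∈ sᶜ ∧ P v then f v else 1) * ∏ v : α, if v ∈ s ∧ P v then f v else 1 := by
  rw [← Finset.prod_mul_distrib]
  apply Finset.prod_congr rfl; intro v _
  by_cases h1 : v ∈ s <;> by_cases h2 : P v <;> simp [h1, h2]

lemma prod_image_form {N k : ℕ} (l : Fin k → Fin N) (hl : Function.Injective l) (P : Fin N → Prop)
    [DecidablePred P] (f : Fin N → ℂ) :
    (∏ v : Fin N, if v ∈ Finset.univ.image l ∧ P v then f v else 1)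
      = ∏ i : Fin k, if P (l i) then f (l i) else 1 := by
  rw [← prod_mem_ite (Finset.univ.image l) P f,
    Finset.prod_image (fun x _ y _ h => hl h)]

lemma prod_prod_reindex {k : ℕ} (e : Equiv.Perm (Fin k)) (F : Fin k → Fin k → ℂ) :
    ∏ x, ∏ y, F x y = ∏ x, ∏ y, F (e x) (e y) := by
  rw [← Equiv.prod_comp e (fun x => ∏ y, F x y)]
  exact Finset.prod_congr rfl (fun x _ => (Equiv.prod_comp e (F (e x))).symm)

lemma prod_oIso {N k : ℕ} (l : Fin k → Fin N) (hl : Function.Injective l) (h : Fin N → ℂ) :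
    ∏ i : Fin (N - k), h ((oIso l hl i : Fin N)) = ∏ v ∈ (Finset.univ.image l)ᶜ, h v := by
  unfold oIso
  exact prod_orderIsoOfFin _ _ h

end Aux

set_option maxHeartbeats 1600000 in
/-- On the support of `δ_C`, the factor `S_C` factorizes as `S^σ(θ)·S^ρ(η)`, where `σ` moves the
contracted left indices `l_1,…,l_k` to the end (keeping the remaining indices in increasing
order) and `ρ` moves the contracted right indices, in reversed order `r_k,…,r_1`, to the front
(keeping the remaining indices in increasing order). -/
theorem stmt12 (S : ℝ → ℂ) (hsmooth : ContDiff ℝ (⊤ : ℕ∞) S)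
    (hinv : ∀ t : ℝ, S t * S (-t) = 1)
    (hconj : ∀ t : ℝ, S (-t) = (starRingEnd ℂ) (S t))
    (m n : ℕ) (C : Contraction m n)
    (hl : Function.Injective C.l) (hr : Function.Injective C.r) :
    ∃ (σ : Equiv.Perm (Fin m)) (ρ : Equiv.Perm (Fin n)),
      (∀ (j : Fin C.k) (h : m - C.k + (j : ℕ) < m), σ ⟨m - C.k + (j : ℕ), h⟩ = C.l j) ∧
      (∀ i i' : Fin m, (i : ℕ) < m - C.k → (i' : ℕ) < m - C.k → i < i' → σ i < σ i') ∧
      (∀ i : Fin m, (i : ℕ) < m - C.k → σ i ∉ Set.range C.l) ∧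
      (∀ (j : Fin C.k) (h : (j : ℕ) < n),
        ρ ⟨(j : ℕ), h⟩ = C.r ⟨C.k - 1 - (j : ℕ), by have := j.isLt; omega⟩) ∧
      (∀ i i' : Fin n, C.k ≤ (i : ℕ) → C.k ≤ (i' : ℕ) → i < i' → ρ i < ρ i') ∧
      (∀ i : Fin n, C.k ≤ (i : ℕ) → ρ i ∉ Set.range C.r) ∧
      ∀ (θ : Fin m → ℝ) (η : Fin n → ℝ), (∀ j : Fin C.k, θ (C.l j) = η (C.r j)) →
        SC S C θ η = Sperm S σ θ * Sperm S ρ η := by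
  classical
  have hkm : C.k ≤ m := k_le_N C.l hl
  have hkn : C.k ≤ n := k_le_N C.r hr
  have hm : (m - C.k) + C.k = m := by omega
  have hn : C.k + (n - C.k) = n := by omega
  have hrrev : Function.Injective (C.r ∘ revF) := hr.comp revF_inj
  refine ⟨permOf hm (gLmap C.l hl) (gLmap_bijective C.l hl),
          permOf hn (gRmap (C.r ∘ revF) hrrev) (gRmap_bijective _ hrrev), ?_, ?_, ?_, ?_, ?_, ?_, ?_⟩
  · -- σ at contracted positions
    intro j h
    have hq : (⟨m - C.k + (j : ℕ), h⟩ : Fin m) = (eSplit _ _ _ hm).symm (Sum.inr j) :=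
      Fin.ext (by rw [eSplit_symm_inr])
    rw [hq, permOf_symm_apply]
    rfl
  · -- σ monotone on free positions
    intro i i' hi hi' hlt
    have hq : i = (eSplit _ _ _ hm).symm (Sum.inl ⟨(i : ℕ), hi⟩) :=
      Fin.ext (by rw [eSplit_symm_inl])
    have hq' : i' = (eSplit _ _ _ hm).symm (Sum.inl ⟨(i' : ℕ), hi'⟩) :=
      Fin.ext (by rw [eSplit_symm_inl])
    rw [hq, hq', permOf_symm_apply, permOf_symm_apply]
    show ((oIso C.l hl ⟨(i : ℕ), hi⟩ : Fin m)) < ((oIso C.l hl ⟨(i' : ℕ), hi'⟩ : Fin m))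
    exact Subtype.coe_lt_coe.mpr ((oIso C.l hl).lt_iff_lt.mpr hlt)
  · -- σ free positions avoid range l
    intro i hi
    have hq : i = (eSplit _ _ _ hm).symm (Sum.inl ⟨(i : ℕ), hi⟩) :=
      Fin.ext (by rw [eSplit_symm_inl])
    rw [hq, permOf_symm_apply]
    rintro ⟨j, hj⟩
    simp only [gLmap, Sum.elim_inl] at hj
    exact oIso_not_mem C.l hl ⟨(i : ℕ), hi⟩
      (hj ▸ Finset.mem_image_of_mem C.l (Finset.mem_univ j))
  · -- ρ at contracted positions
    intro j h
    have hq : (⟨(j : ℕ), h⟩ : Fin n) = (eSplit _ _ _ hn).symm (Sum.inl j) :=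
      Fin.ext (by rw [eSplit_symm_inl])
    rw [hq, permOf_symm_apply]
    rfl
  · -- ρ monotone on free positions
    intro i i' hi hi' hlt
    have hii : (i : ℕ) - C.k < n - C.k := by have := i.isLt; omega
    have hii' : (i' : ℕ) - C.k < n - C.k := by have := i'.isLt; omega
    have hq : i = (eSplit _ _ _ hn).symm (Sum.inr ⟨(i : ℕ) - C.k, hii⟩) :=
      Fin.ext (by rw [eSplit_symm_inr]; simp; omega)
    have hq' : i' = (eSplit _ _ _ hn).symm (Sum.inr ⟨(i' : ℕ) - C.k, hii'⟩) :=
      Fin.ext (by rw [eSplit_symm_inr]; simp; omega)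
    rw [hq, hq', permOf_symm_apply, permOf_symm_apply]
    show ((oIso _ hrrev ⟨_, hii⟩ : Fin n)) < ((oIso _ hrrev ⟨_, hii'⟩ : Fin n))
    refine Subtype.coe_lt_coe.mpr ((oIso _ hrrev).lt_iff_lt.mpr ?_)
    rw [Fin.lt_def] at hlt ⊢
    simp; omega
  · -- ρ free positions avoid range r
    intro i hi
    have hii : (i : ℕ) - C.k < n - C.k := by have := i.isLt; omega
    have hq : i = (eSplit _ _ _ hn).symm (Sum.inr ⟨(i : ℕ) - C.k, hii⟩) :=
      Fin.ext (by rw [eSplit_symm_inr]; simp; omega)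
    rw [hq, permOf_symm_apply]
    rintro ⟨j, hj⟩
    refine oIso_not_mem _ hrrev ⟨_, hii⟩ ?_
    have : C.r j = ((oIso _ hrrev ⟨_, hii⟩ : Fin n)) := hj
    have hj' : (C.r ∘ revF) (revF j) = ((oIso _ hrrev ⟨_, hii⟩ : Fin n)) := by
      simp [Function.comp, revF_invol j, this]
    exact hj' ▸ Finset.mem_image_of_mem (C.r ∘ revF) (Finset.mem_univ (revF j))
  · -- the main identity
    intro θ η hδ
    -- pointwise evaluation of xivec and Smod
    have hx1 : ∀ v : Fin m, xivec θ η (v : ℕ) = θ v := by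
      intro v
      simp only [xivec, v.isLt, dif_pos, Fin.eta]
    have hx2 : ∀ w : Fin n, xivec θ η (m + (w : ℕ)) = η w := by
      intro w
      have h1 : ¬ (m + (w : ℕ) < m) := by omega
      have h2 : m + (w : ℕ) - m < n := by have := w.isLt; omega
      simp only [xivec, dif_neg h1, dif_pos h2]
      congr 1
      apply Fin.ext; simp
    have hsm1 : ∀ v u : Fin m, Smod S m (xivec θ η) (v : ℕ) (u : ℕ) = S (θ v - θ u) := by
      intro v u
      rw [Smod, if_neg (by simp [v.isLt, u.isLt]), hx1, hx1]
    have hsm2 : ∀ (w : Fin n) (u : Fin m),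
        Smod S m (xivec θ η) (m + (w : ℕ)) (u : ℕ) = S (θ u - η w) := by
      intro w u
      rw [Smod, if_pos (Or.inr ⟨u.isLt, by omega⟩), hx1, hx2]
    have hsm3 : ∀ (u : Fin m) (w : Fin n),
        Smod S m (xivec θ η) (u : ℕ) (m + (w : ℕ)) = S (η w - θ u) := by
      intro u w
      rw [Smod, if_pos (Or.inl ⟨u.isLt, by omega⟩), hx1, hx2]
    -- step 1: the first factor of SC
    have hA : (∏ j : Fin C.k, ∏ p ∈ Finset.Ico ((C.l j : ℕ) + 1) (m + (C.r j : ℕ)),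
          Smod S m (xivec θ η) p (C.l j))
        = (∏ j : Fin C.k, ∏ v : Fin m,
            if (C.l j : ℕ) < (v : ℕ) then S (θ v - θ (C.l j)) else 1) *
          (∏ j : Fin C.k, ∏ w : Fin n,
            if (w : ℕ) < (C.r j : ℕ) then S (η (C.r j) - η w) else 1) := by
      rw [← Finset.prod_mul_distrib]
      apply Finset.prod_congr rfl; intro j _
      rw [← Finset.prod_Ico_consecutive (fun p => Smod S m (xivec θ η) p (C.l j))
        (show (C.l j : ℕ) + 1 ≤ m from (C.l j).isLt) (Nat.le_add_right m (C.r j : ℕ))]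
      refine congrArg₂ (· * ·) ?_ ?_
      · rw [hprod_Ico_fin]
        apply Finset.prod_congr rfl; intro v _
        by_cases hcond : (C.l j : ℕ) < (v : ℕ)
        · rw [if_pos (by omega), if_pos hcond]
          exact hsm1 v (C.l j)
        · rw [if_neg (by omega), if_neg hcond]
      · rw [Finset.prod_Ico_eq_prod_range]
        have hmm : m + (C.r j : ℕ) - m = (C.r j : ℕ) := by omega
        rw [hmm, hprod_range_fin _ _ n (C.r j).isLt.le]
        apply Finset.prod_congr rfl; intro w _
        by_cases hcond : (w : ℕ) < (C.r j : ℕ)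
        · rw [if_pos hcond, if_pos hcond, hsm2 w (C.l j), hδ j]
        · rw [if_neg hcond, if_neg hcond]
    -- step 2: split the θ part into free and contracted indices
    have hθs : (∏ j : Fin C.k, ∏ v : Fin m,
          if (C.l j : ℕ) < (v : ℕ) then S (θ v - θ (C.l j)) else 1)
        = (∏ j : Fin C.k, ∏ v : Fin m,
            if v ∈ (Finset.univ.image C.l)ᶜ ∧ (C.l j : ℕ) < (v : ℕ) then
              S (θ v - θ (C.l j)) else 1) *
          (∏ x : Fin C.k, ∏ y : Fin C.k,
            if (C.l x : ℕ) < (C.l y : ℕ) then S (θ (C.l y) - θ (C.l x)) else 1) := by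
      rw [← Finset.prod_mul_distrib]
      apply Finset.prod_congr rfl; intro j _
      rw [prod_split_mem (Finset.univ.image C.l) (fun v => (C.l j : ℕ) < (v : ℕ))
        (fun v => S (θ v - θ (C.l j)))]
      refine congrArg₂ (· * ·) rfl ?_
      exact prod_image_form C.l hl _ _
    -- step 3: split the η part into free and contracted indices
    have hηs : (∏ j : Fin C.k, ∏ w : Fin n,
          if (w : ℕ) < (C.r j : ℕ) then S (η (C.r j) - η w) else 1)
        = (∏ j : Fin C.k, ∏ w : Fin n,
            if w ∈ (Finset.univ.image C.r)ᶜ ∧ (w : ℕ) < (C.r j : ℕ) then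
              S (η (C.r j) - η w) else 1) *
          (∏ x : Fin C.k, ∏ y : Fin C.k,
            if (C.r y : ℕ) < (C.r x : ℕ) then S (η (C.r x) - η (C.r y)) else 1) := by
      rw [← Finset.prod_mul_distrib]
      apply Finset.prod_congr rfl; intro j _
      rw [prod_split_mem (Finset.univ.image C.r) (fun w => (w : ℕ) < (C.r j : ℕ))
        (fun w => S (η (C.r j) - η w))]
      refine congrArg₂ (· * ·) rfl ?_
      exact prod_image_form C.r hr _ _
    -- step 4: the B factor of SC
    have hB : (∏ j : Fin C.k, ∏ i : Fin C.k,
          if (C.r i : ℕ) < (C.r j : ℕ) ∧ (C.l i : ℕ) < (C.l j : ℕ) then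
            Smod S m (xivec θ η) (C.l j) (m + (C.r i : ℕ)) else 1)
        = ∏ x : Fin C.k, ∏ y : Fin C.k,
            if (C.r y : ℕ) < (C.r x : ℕ) ∧ (C.l y : ℕ) < (C.l x : ℕ) then
              S (η (C.r y) - η (C.r x)) else 1 := by
      apply Finset.prod_congr rfl; intro j _
      apply Finset.prod_congr rfl; intro i _
      by_cases hcond : (C.r i : ℕ) < (C.r j : ℕ) ∧ (C.l i : ℕ) < (C.l j : ℕ)
      · rw [if_pos hcond, if_pos hcond, hsm3 (C.l j) (C.r i), hδ j]
      · rw [if_neg hcond, if_neg hcond]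
    -- step 5: Sperm σ
    have hSσ : Sperm S (permOf hm (gLmap C.l hl) (gLmap_bijective C.l hl)) θ
        = (∏ j : Fin C.k, ∏ v : Fin m,
            if v ∈ (Finset.univ.image C.l)ᶜ ∧ (C.l j : ℕ) < (v : ℕ) then
              S (θ v - θ (C.l j)) else 1) *
          (∏ x : Fin C.k, ∏ y : Fin C.k,
            if (x : ℕ) < (y : ℕ) ∧ (C.l y : ℕ) < (C.l x : ℕ) then
              S (θ (C.l x) - θ (C.l y)) else 1) := by
      rw [Sperm_permOf]
      have hll : (∏ i : Fin (m - C.k), ∏ i' : Fin (m - C.k),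
          if i < i' ∧ gLmap C.l hl (Sum.inl i') < gLmap C.l hl (Sum.inl i) then
            S (θ (gLmap C.l hl (Sum.inl i)) - θ (gLmap C.l hl (Sum.inl i'))) else 1) = 1 := by
        apply Finset.prod_eq_one; intro i _
        apply Finset.prod_eq_one; intro i' _
        rw [if_neg]
        rintro ⟨h1, h2⟩
        simp only [gLmap, Sum.elim_inl] at h2
        exact absurd h2 (not_lt.mpr (Subtype.coe_le_coe.mpr
          ((oIso C.l hl).le_iff_le.mpr h1.le)))
      rw [hll, one_mul]
      refine congrArg₂ (· * ·) ?_ ?_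
      · rw [Finset.prod_comm]
        apply Finset.prod_congr rfl; intro j _
        simp only [gLmap, Sum.elim_inl, Sum.elim_inr]
        rw [← prod_mem_ite ((Finset.univ.image C.l)ᶜ) (fun v : Fin m => (C.l j : ℕ) < (v : ℕ))
            (fun v => S (θ v - θ (C.l j))),
          ← prod_oIso C.l hl (fun v : Fin m =>
            if (C.l j : ℕ) < (v : ℕ) then S (θ v - θ (C.l j)) else 1)]
        apply Finset.prod_congr rfl; intro i _
        exact if_congr Fin.lt_def rfl rfl
      · apply Finset.prod_congr rfl; intro x _
        apply Finset.prod_congr rfl; intro y _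
        simp only [gLmap, Sum.elim_inr]
        exact if_congr (and_congr Fin.lt_def Fin.lt_def) rfl rfl
    -- image of reversed r
    have himg : Finset.univ.image (C.r ∘ revF) = Finset.univ.image C.r := by
      ext v
      simp only [Finset.mem_image, Finset.mem_univ, true_and, Function.comp]
      constructor
      · rintro ⟨j, hj⟩; exact ⟨revF j, hj⟩
      · rintro ⟨j, hj⟩; exact ⟨revF j, by rw [revF_invol j]; exact hj⟩
    -- step 6: Sperm ρ
    have hSρ : Sperm S (permOf hn (gRmap (C.r ∘ revF) hrrev) (gRmap_bijective _ hrrev)) η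
        = (∏ x : Fin C.k, ∏ y : Fin C.k,
            if (y : ℕ) < (x : ℕ) ∧ (C.r y : ℕ) < (C.r x : ℕ) then
              S (η (C.r x) - η (C.r y)) else 1) *
          (∏ j : Fin C.k, ∏ w : Fin n,
            if w ∈ (Finset.univ.image C.r)ᶜ ∧ (w : ℕ) < (C.r j : ℕ) then
              S (η (C.r j) - η w) else 1) := by
      rw [Sperm_permOf]
      have hrr : (∏ i : Fin (n - C.k), ∏ i' : Fin (n - C.k),
          if i < i' ∧ gRmap (C.r ∘ revF) hrrev (Sum.inr i') < gRmap (C.r ∘ revF) hrrev (Sum.inr i)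
          then S (η (gRmap (C.r ∘ revF) hrrev (Sum.inr i))
            - η (gRmap (C.r ∘ revF) hrrev (Sum.inr i'))) else 1) = 1 := by
        apply Finset.prod_eq_one; intro i _
        apply Finset.prod_eq_one; intro i' _
        rw [if_neg]
        rintro ⟨h1, h2⟩
        simp only [gRmap, Sum.elim_inr] at h2
        exact absurd h2 (not_lt.mpr (Subtype.coe_le_coe.mpr
          ((oIso _ hrrev).le_iff_le.mpr h1.le)))
      rw [hrr, mul_one]
      refine congrArg₂ (· * ·) ?_ ?_
      · -- ll block, reindexed by revE
        conv_lhs => rw [prod_prod_reindex revE]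
        apply Finset.prod_congr rfl; intro x _
        apply Finset.prod_congr rfl; intro y _
        simp only [gRmap, Sum.elim_inl, revE_apply, Function.comp_apply, revF_invol x,
          revF_invol y]
        exact if_congr (and_congr ((revF_lt_iff x y).trans Fin.lt_def) Fin.lt_def) rfl rfl
      · -- lr block, reindexed by revE, then enumerated by oIso
        conv_lhs => rw [← Equiv.prod_comp revE]
        apply Finset.prod_congr rfl; intro x _
        simp only [gRmap, Sum.elim_inl, Sum.elim_inr, revE_apply, Function.comp_apply,
          revF_invol x]
        rw [← himg,
          ← prod_mem_ite ((Finset.univ.image (C.r ∘ revF))ᶜ)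
            (fun w : Fin n => (w : ℕ) < (C.r x : ℕ)) (fun w => S (η (C.r x) - η w)),
          ← prod_oIso (C.r ∘ revF) hrrev (fun w : Fin n =>
            if (w : ℕ) < (C.r x : ℕ) then S (η (C.r x) - η w) else 1)]
        apply Finset.prod_congr rfl; intro i _
        exact if_congr Fin.lt_def rfl rfl
    -- final assembly
    simp only [SC]
    rw [hA, hθs, hηs, hB, hSσ, hSρ]
    have halg : ∀ a b c d e f g : ℂ, c * (e * g) = d * f →
        ((a * c) * (b * e)) * g = (a * d) * (f * b) := by
      intro a b c d e f g h
      calc ((a * c) * (b * e)) * g = (a * b) * (c * (e * g)) := by ring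
        _ = (a * b) * (d * f) := by rw [h]
        _ = (a * d) * (f * b) := by ring
    apply halg
    -- the key pairwise identity
    have hFdiag : ∀ i : Fin C.k,
        ((if (C.l i : ℕ) < (C.l i : ℕ) then S (θ (C.l i) - θ (C.l i)) else 1) *
          ((if (C.r i : ℕ) < (C.r i : ℕ) then S (η (C.r i) - η (C.r i)) else 1) *
           (if (C.r i : ℕ) < (C.r i : ℕ) ∧ (C.l i : ℕ) < (C.l i : ℕ) then
              S (η (C.r i) - η (C.r i)) else 1))) = 1 := by
      intro i; simp
    have hGdiag : ∀ i : Fin C.k,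
        ((if (i : ℕ) < (i : ℕ) ∧ (C.l i : ℕ) < (C.l i : ℕ) then
            S (θ (C.l i) - θ (C.l i)) else 1) *
         (if (i : ℕ) < (i : ℕ) ∧ (C.r i : ℕ) < (C.r i : ℕ) then
            S (η (C.r i) - η (C.r i)) else 1)) = 1 := by
      intro i; simp
    have h1 : (∏ x : Fin C.k, ∏ y : Fin C.k,
          if (C.l x : ℕ) < (C.l y : ℕ) then S (θ (C.l y) - θ (C.l x)) else 1) *
        ((∏ x : Fin C.k, ∏ y : Fin C.k,
          if (C.r y : ℕ) < (C.r x : ℕ) then S (η (C.r x) - η (C.r y)) else 1) *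
         (∏ x : Fin C.k, ∏ y : Fin C.k,
          if (C.r y : ℕ) < (C.r x : ℕ) ∧ (C.l y : ℕ) < (C.l x : ℕ) then
            S (η (C.r y) - η (C.r x)) else 1))
        = ∏ x : Fin C.k, ∏ y : Fin C.k,
          ((if (C.l x : ℕ) < (C.l y : ℕ) then S (θ (C.l y) - θ (C.l x)) else 1) *
           ((if (C.r y : ℕ) < (C.r x : ℕ) then S (η (C.r x) - η (C.r y)) else 1) *
            (if (C.r y : ℕ) < (C.r x : ℕ) ∧ (C.l y : ℕ) < (C.l x : ℕ) then
              S (η (C.r y) - η (C.r x)) else 1))) := by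
      simp only [← Finset.prod_mul_distrib]
    have h2 : (∏ x : Fin C.k, ∏ y : Fin C.k,
          if (x : ℕ) < (y : ℕ) ∧ (C.l y : ℕ) < (C.l x : ℕ) then
            S (θ (C.l x) - θ (C.l y)) else 1) *
        (∏ x : Fin C.k, ∏ y : Fin C.k,
          if (y : ℕ) < (x : ℕ) ∧ (C.r y : ℕ) < (C.r x : ℕ) then
            S (η (C.r x) - η (C.r y)) else 1)
        = ∏ x : Fin C.k, ∏ y : Fin C.k,
          ((if (x : ℕ) < (y : ℕ) ∧ (C.l y : ℕ) < (C.l x : ℕ) then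
              S (θ (C.l x) - θ (C.l y)) else 1) *
           (if (y : ℕ) < (x : ℕ) ∧ (C.r y : ℕ) < (C.r x : ℕ) then
              S (η (C.r x) - η (C.r y)) else 1)) := by
      simp only [← Finset.prod_mul_distrib]
    rw [h1, h2, prod_pairs_symm _ hFdiag, prod_pairs_symm _ hGdiag]
    apply Finset.prod_congr rfl
    intro p hp
    simp only [Finset.mem_filter, Finset.mem_univ, true_and] at hp
    have hxy : (p.1 : ℕ) < (p.2 : ℕ) := hp
    have hxyn : ¬ (p.2 : ℕ) < (p.1 : ℕ) := Nat.lt_asymm hxy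
    have hlne : (C.l p.1 : ℕ) ≠ (C.l p.2 : ℕ) := by
      intro hq
      exact absurd (hl (Fin.ext hq)) (Fin.ne_of_lt hp)
    have hrne : (C.r p.1 : ℕ) ≠ (C.r p.2 : ℕ) := by
      intro hq
      exact absurd (hr (Fin.ext hq)) (Fin.ne_of_lt hp)
    simp only [hδ]
    have hab : η (C.r p.1) - η (C.r p.2) = -(η (C.r p.2) - η (C.r p.1)) := by ring
    rcases lt_or_gt_of_ne hlne with h1 | h1 <;> rcases lt_or_gt_of_ne hrne with h2 | h2 <;>
      simp only [if_pos, if_neg, h1, h2, hxy, hxyn, Nat.lt_asymm h1, Nat.lt_asymm h2,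
        if_true, if_false, and_true, true_and, and_false, false_and, ite_true, ite_false,
        not_false_iff, lt_self_iff_false]
    · rw [hab]
      linear_combination S (η (C.r p.2) - η (C.r p.1)) * hinv (η (C.r p.2) - η (C.r p.1))
    · rw [hab]
      linear_combination hinv (η (C.r p.2) - η (C.r p.1))
    · ring
    · rw [hab]
      linear_combination S (-(η (C.r p.2) - η (C.r p.1))) * hinv (η (C.r p.2) - η (C.r p.1))
end

section
/- For contractions C ∈ 𝒞_{m,n} and C' ∈ 𝒞_{m−|C|,n−|C|}, the delta factors satisfy δ_C(θ,η)·δ_{C'}(θ̂,η̂) = δ_{C⊍C'}(θ,η) and the S-factors compose as δ_C δ_{C'} S_C(θ,η) S_{C'}(θ̂,η̂) = δ_{C⊍C'} S_{C⊍C'}(θ,η), where θ̂, η̂ are θ, η with the C-contracted components removed and C⊍C' is the composed contraction. -/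
open scoped BigOperators

lemma xivec_lt {m n : ℕ} (θ : Fin m → ℝ) (η : Fin n → ℝ) {i : ℕ} (h : i < m) :
    xivec θ η i = θ ⟨i, h⟩ := by rw [xivec, dif_pos h]

lemma xivec_add {m n : ℕ} (θ : Fin m → ℝ) (η : Fin n → ℝ) {j : ℕ} (h : j < n) :
    xivec θ η (m + j) = η ⟨j, h⟩ := by
  have h1 : ¬ (m + j < m) := by omega
  have h2 : m + j - m = j := by omega
  rw [xivec]; rw [dif_neg h1]; simp only [h2]; rw [dif_pos h]

lemma smod_ll {S : ℝ → ℂ} {m : ℕ} {ξ : ℕ → ℝ} {a b : ℕ} (ha : a < m) (hb : b < m) :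
    Smod S m ξ a b = S (ξ a - ξ b) := by rw [Smod, if_neg]; tauto

lemma smod_gg {S : ℝ → ℂ} {m : ℕ} {ξ : ℕ → ℝ} {a b : ℕ} (ha : ¬ a < m) (hb : ¬ b < m) :
    Smod S m ξ a b = S (ξ a - ξ b) := by rw [Smod, if_neg]; tauto

lemma smod_lg {S : ℝ → ℂ} {m : ℕ} {ξ : ℕ → ℝ} {a b : ℕ} (ha : a < m) (hb : ¬ b < m) :
    Smod S m ξ a b = S (ξ b - ξ a) := by rw [Smod, if_pos]; tauto

lemma smod_gl {S : ℝ → ℂ} {m : ℕ} {ξ : ℕ → ℝ} {a b : ℕ} (ha : ¬ a < m) (hb : b < m) :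
    Smod S m ξ a b = S (ξ b - ξ a) := by rw [Smod, if_pos]; tauto

lemma smod_congr {S : ℝ → ℂ} {m1 m2 : ℕ} {ξ1 ξ2 : ℕ → ℝ} {a1 b1 a2 b2 : ℕ}
    (ha : a1 < m1 ↔ a2 < m2) (hb : b1 < m1 ↔ b2 < m2)
    (hξa : ξ1 a1 = ξ2 a2) (hξb : ξ1 b1 = ξ2 b2) :
    Smod S m1 ξ1 a1 b1 = Smod S m2 ξ2 a2 b2 := by
  rw [Smod, Smod, hξa, hξb]
  by_cases h1 : a1 < m1 <;> by_cases h2 : b1 < m1 <;>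
    simp only [ha, hb] at h1 h2 ⊢ <;> simp [h1, h2]


lemma enum_inj {m k : ℕ} (l : Fin k → Fin m) (e : Fin (m - k) → Fin m)
    (he : StrictMono e) (her : ∀ i, i ∈ Set.range e ↔ i ∉ Set.range l)
    (hk : k ≤ m) : Function.Injective l := by
  classical
  have h1 : (Finset.univ.image e).card = m - k := by
    rw [Finset.card_image_of_injective _ he.injective, Finset.card_univ, Fintype.card_fin]
  have h2 : (Finset.univ.image e) ∪ (Finset.univ.image l) = Finset.univ := by
    ext i
    simp only [Finset.mem_union, Finset.mem_image, Finset.mem_univ, iff_true, true_and]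
    by_cases h : i ∈ Set.range l
    · right; obtain ⟨j, hj⟩ := h; exact ⟨j, hj⟩
    · left; obtain ⟨j, hj⟩ := (her i).mpr h; exact ⟨j, hj⟩
  have hdisj : Disjoint (Finset.univ.image e) (Finset.univ.image l) := by
    rw [Finset.disjoint_left]
    intro a ha hb
    simp only [Finset.mem_image, Finset.mem_univ, true_and] at ha hb
    obtain ⟨j, hj⟩ := ha
    have := (her a).mp ⟨j, hj⟩
    exact this (by obtain ⟨j', hj'⟩ := hb; exact ⟨j', hj'⟩)
  have hcard : (Finset.univ.image l).card = k := by
    have := Finset.card_union_of_disjoint hdisj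
    rw [h2, h1, Finset.card_univ, Fintype.card_fin] at this
    omega
  have hinj := Finset.injOn_of_card_image_eq (s := (Finset.univ : Finset (Fin k))) (f := l)
    (by rw [hcard, Finset.card_univ, Fintype.card_fin])
  exact fun a b h => hinj (Finset.mem_univ a) (Finset.mem_univ b) h

lemma per_j (S : ℝ → ℂ) (hinv : ∀ t : ℝ, S t * S (-t) = 1)
    {m n k : ℕ} (l : Fin k → Fin m) (r : Fin k → Fin n)
    (linj : Function.Injective l) (rinj : Function.Injective r)
    (eθ : Fin (m - k) → Fin m) (eη : Fin (n - k) → Fin n)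
    (heθ : StrictMono eθ) (heη : StrictMono eη)
    (heθr : ∀ i, i ∈ Set.range eθ ↔ i ∉ Set.range l)
    (heηr : ∀ i, i ∈ Set.range eη ↔ i ∉ Set.range r)
    (θ : Fin m → ℝ) (η : Fin n → ℝ)
    (hC : ∀ j, θ (l j) = η (r j))
    (l' : Fin (m - k)) (r' : Fin (n - k)) (hLR : θ (eθ l') = η (eη r')) :
    (∏ p ∈ Finset.Ico ((eθ l' : ℕ) + 1) (m + (eη r' : ℕ)),
        Smod S m (xivec θ η) p (eθ l')) *
      ((∏ i : Fin k, if (r i : ℕ) < (eη r' : ℕ) ∧ (l i : ℕ) < (eθ l' : ℕ) then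
          Smod S m (xivec θ η) (eθ l') (m + (r i : ℕ)) else 1) *
       ∏ j : Fin k, if (eη r' : ℕ) < (r j : ℕ) ∧ (eθ l' : ℕ) < (l j : ℕ) then
          Smod S m (xivec θ η) (l j) (m + (eη r' : ℕ)) else 1) =
    ∏ q ∈ Finset.Ico ((l' : ℕ) + 1) ((m - k) + (r' : ℕ)),
      Smod S (m - k) (xivec (θ ∘ eθ) (η ∘ eη)) q l' := by
  classical
  set ξ := xivec θ η with hξdef
  set ξ' := xivec (θ ∘ eθ) (η ∘ eη) with hξ'def
  set L : ℕ := (eθ l' : ℕ) with hLdef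
  set R : ℕ := (eη r' : ℕ) with hRdef
  have hLm : L < m := (eθ l').isLt
  have hRn : R < n := (eη r').isLt
  have hξL : ξ L = θ (eθ l') := by rw [hξdef, xivec_lt θ η hLm]
  have hξR : ξ (m + R) = η (eη r') := by rw [hξdef, xivec_add θ η hRn]
  have hξl : ∀ i : Fin k, ξ (l i : ℕ) = θ (l i) := fun i => by
    rw [hξdef, xivec_lt θ η (l i).isLt]
  have hξr : ∀ i : Fin k, ξ (m + (r i : ℕ)) = η (r i) := fun i => by
    rw [hξdef, xivec_add θ η (r i).isLt]
  have hLnot : ∀ i : Fin k, (l i : ℕ) ≠ L := by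
    intro i he
    have : eθ l' ∈ Set.range eθ := ⟨l', rfl⟩
    exact (heθr _).mp this ⟨i, Fin.ext he⟩
  have hRnot : ∀ i : Fin k, (r i : ℕ) ≠ R := by
    intro i he
    have : eη r' ∈ Set.range eη := ⟨r', rfl⟩
    exact (heηr _).mp this ⟨i, Fin.ext he⟩
  set Pcon : ℕ → Prop := fun p => (∃ i, (l i : ℕ) = p) ∨ (∃ i, m + (r i : ℕ) = p) with hPdef
  rw [← Finset.prod_filter_mul_prod_filter_not (Finset.Ico (L + 1) (m + R)) Pcon]
  -- uncontracted part equals the RHS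
  have hunc : ∏ p ∈ (Finset.Ico (L + 1) (m + R)).filter (fun p => ¬ Pcon p),
      Smod S m ξ p L =
      ∏ q ∈ Finset.Ico ((l' : ℕ) + 1) ((m - k) + (r' : ℕ)), Smod S (m - k) ξ' q (l' : ℕ) := by
    symm
    set E : ℕ → ℕ := fun q => if h : q < m - k then (eθ ⟨q, h⟩ : ℕ)
      else if h' : q - (m - k) < n - k then m + (eη ⟨q - (m - k), h'⟩ : ℕ) else m + n with hEdef
    have hr'lt : (r' : ℕ) ≤ n - k := le_of_lt r'.isLt
    have hEθ : ∀ (q : ℕ) (h : q < m - k), E q = (eθ ⟨q, h⟩ : ℕ) := fun q h => dif_pos h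
    have hEη : ∀ (q : ℕ) (h : ¬ q < m - k) (h' : q - (m - k) < n - k),
        E q = m + (eη ⟨q - (m - k), h'⟩ : ℕ) := fun q h h' => by
      rw [hEdef]; simp only [dif_neg h, dif_pos h']
    refine Finset.prod_bij (fun q _ => E q) ?_ ?_ ?_ ?_
    · -- maps into
      intro q hq
      beta_reduce
      rw [Finset.mem_Ico] at hq
      rw [Finset.mem_filter, Finset.mem_Ico]
      by_cases h : q < m - k
      · rw [hEθ q h]
        have hgt : L < (eθ ⟨q, h⟩ : ℕ) := heθ (show l' < (⟨q, h⟩ : Fin (m - k)) from hq.1)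
        have hlt : (eθ ⟨q, h⟩ : ℕ) < m := (eθ ⟨q, h⟩).isLt
        refine ⟨⟨by omega, by omega⟩, ?_⟩
        simp only [hPdef]
        push_neg
        refine ⟨fun i hi => ?_, fun i => by omega⟩
        exact (heθr _).mp ⟨⟨q, h⟩, rfl⟩ ⟨i, Fin.ext hi⟩
      · have h' : q - (m - k) < n - k := by omega
        rw [hEη q h h']
        have hlt : (eη ⟨q - (m - k), h'⟩ : ℕ) < R :=
          heη (show (⟨q - (m - k), h'⟩ : Fin (n - k)) < r' by
            rw [Fin.lt_def]; simp only []; omega)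
        refine ⟨⟨by omega, by omega⟩, ?_⟩
        simp only [hPdef]
        push_neg
        refine ⟨fun i => by have := (l i).isLt; omega, fun i hi => ?_⟩
        have hi' : (r i : ℕ) = (eη ⟨q - (m - k), h'⟩ : ℕ) := by omega
        exact (heηr _).mp ⟨⟨q - (m - k), h'⟩, rfl⟩ ⟨i, Fin.ext hi'⟩
    · -- injective
      intro a ha b hb hab
      beta_reduce at hab
      rw [Finset.mem_Ico] at ha hb
      by_cases h1 : a < m - k <;> by_cases h2 : b < m - k
      · rw [hEθ a h1, hEθ b h2] at hab
        have := heθ.injective (Fin.ext hab : eθ ⟨a, h1⟩ = eθ ⟨b, h2⟩)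
        exact congrArg Fin.val this
      · have h2' : b - (m - k) < n - k := by omega
        rw [hEθ a h1, hEη b h2 h2'] at hab
        have := (eθ ⟨a, h1⟩).isLt; omega
      · have h1' : a - (m - k) < n - k := by omega
        rw [hEη a h1 h1', hEθ b h2] at hab
        have := (eθ ⟨b, h2⟩).isLt; omega
      · have h1' : a - (m - k) < n - k := by omega
        have h2' : b - (m - k) < n - k := by omega
        rw [hEη a h1 h1', hEη b h2 h2'] at hab
        have : (⟨a - (m - k), h1'⟩ : Fin (n - k)) = ⟨b - (m - k), h2'⟩ :=
          heη.injective (Fin.ext (by omega))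
        have := congrArg Fin.val this
        simp only [] at this
        omega
    · -- surjective
      intro p hp
      beta_reduce
      rw [Finset.mem_filter, Finset.mem_Ico] at hp
      obtain ⟨⟨hp1, hp2⟩, hpP⟩ := hp
      simp only [hPdef] at hpP
      push_neg at hpP
      by_cases hpm : p < m
      · have hnl : (⟨p, hpm⟩ : Fin m) ∉ Set.range l := by
          rintro ⟨i, hi⟩
          exact hpP.1 i (by rw [hi])
        obtain ⟨q, hq⟩ := (heθr _).mpr hnl
        have hqv : (eθ q : ℕ) = p := by rw [hq]
        refine ⟨(q : ℕ), ?_, ?_⟩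
        · rw [Finset.mem_Ico]
          have hlq : l' < q := by
            have : eθ l' < eθ q := by rw [Fin.lt_def]; omega
            exact heθ.lt_iff_lt.mp this
          have := q.isLt
          omega
        · rw [hEθ (q : ℕ) q.isLt]
          rw [Fin.eta, hqv]
      · have hsn : p - m < n := by omega
        have hnr : (⟨p - m, hsn⟩ : Fin n) ∉ Set.range r := by
          rintro ⟨i, hi⟩
          refine hpP.2 i ?_
          have := congrArg Fin.val hi
          simp only [] at this
          omega
        obtain ⟨q, hq⟩ := (heηr _).mpr hnr
        have hqv : (eη q : ℕ) = p - m := by rw [hq]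
        refine ⟨(m - k) + (q : ℕ), ?_, ?_⟩
        · rw [Finset.mem_Ico]
          have hlq : q < r' := by
            have : eη q < eη r' := by rw [Fin.lt_def]; omega
            exact heη.lt_iff_lt.mp this
          have := l'.isLt
          omega
        · have hnlt : ¬ ((m - k) + (q : ℕ) < m - k) := by omega
          have h' : (m - k) + (q : ℕ) - (m - k) < n - k := by
            have := q.isLt; omega
          rw [hEη _ hnlt h']
          have : (⟨(m - k) + (q : ℕ) - (m - k), h'⟩ : Fin (n - k)) = q :=
            Fin.ext (show (m - k) + (q : ℕ) - (m - k) = (q : ℕ) by omega)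
          rw [this, hqv]
          omega
    · -- values
      intro q hq
      beta_reduce
      rw [Finset.mem_Ico] at hq
      by_cases h : q < m - k
      · rw [hEθ q h]
        refine smod_congr ?_ ?_ ?_ ?_
        · exact iff_of_true h (eθ ⟨q, h⟩).isLt
        · exact iff_of_true l'.isLt hLm
        · rw [hξ'def, xivec_lt _ _ h, hξdef, xivec_lt θ η (eθ ⟨q, h⟩).isLt]
          simp [Function.comp]
        · rw [hξ'def, xivec_lt _ _ l'.isLt, hξL]
          simp [Function.comp]
      · have h' : q - (m - k) < n - k := by omega
        rw [hEη q h h']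
        have hqe : q = (m - k) + (q - (m - k)) := by omega
        refine smod_congr ?_ ?_ ?_ ?_
        · exact iff_of_false h (by omega)
        · exact iff_of_true l'.isLt hLm
        · conv_lhs => rw [hξ'def, hqe]
          rw [xivec_add _ _ h', hξdef, xivec_add θ η (eη ⟨q - (m - k), h'⟩).isLt]
          simp [Function.comp]
        · rw [hξ'def, xivec_lt _ _ l'.isLt, hξL]
          simp [Function.comp]
  -- contracted part
  have hcon : ∏ p ∈ (Finset.Ico (L + 1) (m + R)).filter Pcon, Smod S m ξ p L =
      (∏ i : Fin k, if L < (l i : ℕ) then Smod S m ξ (l i) L else 1) *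
      ∏ i : Fin k, if (r i : ℕ) < R then Smod S m ξ (m + (r i : ℕ)) L else 1 := by
    have hdisj : Disjoint (Finset.univ.image (fun i : Fin k => (l i : ℕ)))
        (Finset.univ.image (fun i : Fin k => m + (r i : ℕ))) := by
      rw [Finset.disjoint_left]
      intro a ha hb
      simp only [Finset.mem_image, Finset.mem_univ, true_and] at ha hb
      obtain ⟨i, hi⟩ := ha; obtain ⟨j, hj⟩ := hb
      have := (l i).isLt; omega
    have hset : (Finset.Ico (L + 1) (m + R)).filter Pcon =
        ((Finset.univ.image (fun i : Fin k => (l i : ℕ))) ∪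
          (Finset.univ.image (fun i : Fin k => m + (r i : ℕ)))).filter
          (fun p => p ∈ Finset.Ico (L + 1) (m + R)) := by
      ext p
      simp only [Finset.mem_filter, Finset.mem_union, Finset.mem_image, Finset.mem_univ,
        true_and, hPdef]
      tauto
    rw [hset, Finset.prod_filter, Finset.prod_union hdisj,
      Finset.prod_image (fun x _ y _ h => linj (Fin.val_injective h)),
      Finset.prod_image (fun x _ y _ h => rinj (Fin.val_injective (by omega : (r x : ℕ) = (r y : ℕ))))]
    congr 1
    · apply Finset.prod_congr rfl
      intro i _
      apply if_congr _ rfl rfl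
      rw [Finset.mem_Ico]
      have := (l i).isLt; omega
    · apply Finset.prod_congr rfl
      intro i _
      apply if_congr _ rfl rfl
      rw [Finset.mem_Ico]
      have := (r i).isLt; omega
  rw [hunc, hcon]
  have hone : ((∏ i : Fin k, if L < (l i : ℕ) then Smod S m ξ (l i) L else 1) *
      ∏ i : Fin k, if (r i : ℕ) < R then Smod S m ξ (m + (r i : ℕ)) L else 1) *
      ((∏ i : Fin k, if (r i : ℕ) < R ∧ (l i : ℕ) < L then
          Smod S m ξ L (m + (r i : ℕ)) else 1) *
       ∏ j : Fin k, if R < (r j : ℕ) ∧ L < (l j : ℕ) then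
          Smod S m ξ (l j) (m + R) else 1) = 1 := by
    rw [← Finset.prod_mul_distrib, ← Finset.prod_mul_distrib, ← Finset.prod_mul_distrib]
    apply Finset.prod_eq_one
    intro i _
    have hx : η (r i) = θ (l i) := (hC i).symm
    have hy : η (eη r') = θ (eθ l') := hLR.symm
    have hne1 : (l i : ℕ) ≠ L := hLnot i
    have hne2 : (r i : ℕ) ≠ R := hRnot i
    have hmR : ¬ (m + R < m) := by omega
    have hmr : ∀ i : Fin k, ¬ (m + (r i : ℕ) < m) := fun i => by omega
    rcases lt_or_gt_of_ne hne1 with h1 | h1 <;> rcases lt_or_gt_of_ne hne2 with h2 | h2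
    · -- l i < L, r i < R
      rw [if_neg (by omega), if_pos h2, if_pos ⟨h2, h1⟩, if_neg (by omega)]
      rw [smod_gl (hmr i) hLm, smod_lg hLm (hmr i)]
      rw [hξL, hξr i, hx]
      have h := hinv (θ (l i) - θ (eθ l')); rw [neg_sub] at h
      linear_combination h
    · -- l i < L, R < r i
      rw [if_neg (by omega), if_neg (by omega), if_neg (by omega), if_neg (by omega)]
      simp
    · -- L < l i, r i < R
      rw [if_pos h1, if_pos h2, if_neg (by omega), if_neg (by omega)]
      rw [smod_ll (l i).isLt hLm, smod_gl (hmr i) hLm]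
      rw [hξL, hξl i, hξr i, hx]
      have h := hinv (θ (l i) - θ (eθ l')); rw [neg_sub] at h
      linear_combination h
    · -- L < l i, R < r i
      rw [if_pos h1, if_neg (by omega), if_neg (by omega), if_pos ⟨h2, h1⟩]
      rw [smod_ll (l i).isLt hLm, smod_lg (l i).isLt hmR]
      rw [hξL, hξl i, hξR, hy]
      have h := hinv (θ (l i) - θ (eθ l')); rw [neg_sub] at h
      linear_combination h
  linear_combination (∏ q ∈ Finset.Ico ((l' : ℕ) + 1) ((m - k) + (r' : ℕ)),
      Smod S (m - k) ξ' q (l' : ℕ)) * hone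

lemma main_eq (S : ℝ → ℂ) (hinv : ∀ t : ℝ, S t * S (-t) = 1)
    {m n : ℕ} (C : Contraction m n) (C' : Contraction (m - C.k) (n - C.k))
    (eθ : Fin (m - C.k) → Fin m) (eη : Fin (n - C.k) → Fin n)
    (heθ : StrictMono eθ) (heη : StrictMono eη)
    (heθr : ∀ i, i ∈ Set.range eθ ↔ i ∉ Set.range C.l)
    (heηr : ∀ i, i ∈ Set.range eη ↔ i ∉ Set.range C.r)
    (θ : Fin m → ℝ) (η : Fin n → ℝ)
    (hC : ∀ j, θ (C.l j) = η (C.r j))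
    (hC' : ∀ j, θ (eθ (C'.l j)) = η (eη (C'.r j))) :
    SC S C θ η * SC S C' (θ ∘ eθ) (η ∘ eη) =
      SC S ⟨C.k + C'.k, Fin.addCases C.l (fun j => eθ (C'.l j)),
        Fin.addCases C.r (fun j => eη (C'.r j))⟩ θ η := by
  classical
  simp only [SC]
  simp only [Fin.prod_univ_add]
  simp only [Fin.addCases_left, Fin.addCases_right]
  simp only [Finset.prod_mul_distrib]
  have hZ : (∏ x : Fin C'.k, ∏ x_1 : Fin C'.k,
        if (eη (C'.r x_1) : ℕ) < (eη (C'.r x) : ℕ) ∧ (eθ (C'.l x_1) : ℕ) < (eθ (C'.l x) : ℕ) then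
          Smod S m (xivec θ η) (eθ (C'.l x)) (m + (eη (C'.r x_1) : ℕ)) else 1) =
      ∏ j : Fin C'.k, ∏ i : Fin C'.k,
        if (C'.r i : ℕ) < (C'.r j : ℕ) ∧ (C'.l i : ℕ) < (C'.l j : ℕ) then
          Smod S (m - C.k) (xivec (θ ∘ eθ) (η ∘ eη)) (C'.l j) (m - C.k + (C'.r i : ℕ)) else 1 := by
    refine Finset.prod_congr rfl fun x _ => Finset.prod_congr rfl fun x_1 _ => ?_
    refine if_congr ?_ ?_ rfl
    · constructor
      · rintro ⟨h1, h2⟩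
        exact ⟨heη.lt_iff_lt.mp h1, heθ.lt_iff_lt.mp h2⟩
      · rintro ⟨h1, h2⟩
        exact ⟨heη.lt_iff_lt.mpr h1, heθ.lt_iff_lt.mpr h2⟩
    · refine smod_congr ?_ ?_ ?_ ?_
      · exact iff_of_true (eθ (C'.l x)).isLt (C'.l x).isLt
      · exact iff_of_false (by omega) (by omega)
      · rw [xivec_lt θ η (eθ (C'.l x)).isLt, xivec_lt _ _ (C'.l x).isLt]
        simp [Function.comp]
      · rw [xivec_add θ η (eη (C'.r x_1)).isLt, xivec_add _ _ (C'.r x_1).isLt]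
        simp [Function.comp]
  have hX : (∏ x : Fin C.k, ∏ x_1 : Fin C'.k,
        if (eη (C'.r x_1) : ℕ) < (C.r x : ℕ) ∧ (eθ (C'.l x_1) : ℕ) < (C.l x : ℕ) then
          Smod S m (xivec θ η) (C.l x) (m + (eη (C'.r x_1) : ℕ)) else 1) =
      ∏ x_1 : Fin C'.k, ∏ x : Fin C.k,
        if (eη (C'.r x_1) : ℕ) < (C.r x : ℕ) ∧ (eθ (C'.l x_1) : ℕ) < (C.l x : ℕ) then
          Smod S m (xivec θ η) (C.l x) (m + (eη (C'.r x_1) : ℕ)) else 1 :=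
    Finset.prod_comm
  have hkey : (∏ x : Fin C'.k,
      (∏ p ∈ Finset.Ico ((eθ (C'.l x) : ℕ) + 1) (m + (eη (C'.r x) : ℕ)),
          Smod S m (xivec θ η) p (eθ (C'.l x))) *
        ((∏ i : Fin C.k,
            if (C.r i : ℕ) < (eη (C'.r x) : ℕ) ∧ (C.l i : ℕ) < (eθ (C'.l x) : ℕ) then
              Smod S m (xivec θ η) (eθ (C'.l x)) (m + (C.r i : ℕ)) else 1) *
         ∏ j : Fin C.k,
            if (eη (C'.r x) : ℕ) < (C.r j : ℕ) ∧ (eθ (C'.l x) : ℕ) < (C.l j : ℕ) then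
              Smod S m (xivec θ η) (C.l j) (m + (eη (C'.r x) : ℕ)) else 1)) =
      ∏ x : Fin C'.k, ∏ q ∈ Finset.Ico ((C'.l x : ℕ) + 1) (m - C.k + (C'.r x : ℕ)),
        Smod S (m - C.k) (xivec (θ ∘ eθ) (η ∘ eη)) q (C'.l x) := by
    refine Finset.prod_congr rfl fun x _ => ?_
    have hkm : C.k ≤ m := by have := (C'.l x).isLt; omega
    have hkn : C.k ≤ n := by have := (C'.r x).isLt; omega
    exact per_j S hinv C.l C.r (enum_inj C.l eθ heθ heθr hkm) (enum_inj C.r eη heη heηr hkn)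
      eθ eη heθ heη heθr heηr θ η hC (C'.l x) (C'.r x) (hC' x)
  rw [Finset.prod_mul_distrib] at hkey
  conv_lhs at hkey => rw [Finset.prod_mul_distrib]
  rw [hZ, hX, ← hkey]
  ring

/-- Composition of contractions: for `C ∈ 𝒞_{m,n}` and `C' ∈ 𝒞_{m-|C|,n-|C|}` (acting on the
remaining variables `θ̂ = θ ∘ eθ`, `η̂ = η ∘ eη`, where `eθ, eη` enumerate, in increasing order,
the indices not contracted by `C`), the delta factors satisfy
`δ_C(θ,η)·δ_{C'}(θ̂,η̂) = δ_{C⊍C'}(θ,η)` (equality of supports) and, on that support,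
`S_C(θ,η)·S_{C'}(θ̂,η̂) = S_{C⊍C'}(θ,η)`. -/
theorem stmt13 (S : ℝ → ℂ) (hsmooth : ContDiff ℝ (⊤ : ℕ∞) S)
    (hinv : ∀ t : ℝ, S t * S (-t) = 1)
    (hconj : ∀ t : ℝ, S (-t) = (starRingEnd ℂ) (S t))
    (m n : ℕ) (C : Contraction m n) (C' : Contraction (m - C.k) (n - C.k))
    (eθ : Fin (m - C.k) → Fin m) (eη : Fin (n - C.k) → Fin n)
    (heθ : StrictMono eθ) (heη : StrictMono eη)
    (heθr : ∀ i : Fin m, i ∈ Set.range eθ ↔ i ∉ Set.range C.l)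
    (heηr : ∀ i : Fin n, i ∈ Set.range eη ↔ i ∉ Set.range C.r) :
    let D : Contraction m n :=
      ⟨C.k + C'.k, Fin.addCases C.l (fun j => eθ (C'.l j)),
        Fin.addCases C.r (fun j => eη (C'.r j))⟩
    ∀ (θ : Fin m → ℝ) (η : Fin n → ℝ),
      (((∀ j : Fin C.k, θ (C.l j) = η (C.r j)) ∧
          (∀ j : Fin C'.k, (θ ∘ eθ) (C'.l j) = (η ∘ eη) (C'.r j))) ↔
        (∀ j : Fin (C.k + C'.k), θ (D.l j) = η (D.r j))) ∧
      ((∀ j : Fin (C.k + C'.k), θ (D.l j) = η (D.r j)) →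
        SC S C θ η * SC S C' (θ ∘ eθ) (η ∘ eη) = SC S D θ η) := by
  intro D θ η
  refine ⟨?_, ?_⟩
  · constructor
    · rintro ⟨h1, h2⟩ j
      refine Fin.addCases (motive := fun j => θ (D.l j) = η (D.r j)) ?_ ?_ j
      · intro i
        simpa only [D, Fin.addCases_left] using h1 i
      · intro i
        simpa only [D, Fin.addCases_right, Function.comp] using h2 i
    · intro h
      constructor
      · intro j
        simpa only [D, Fin.addCases_left] using h (Fin.castAdd C'.k j)
      · intro j
        simpa only [D, Fin.addCases_right, Function.comp] using h (Fin.natAdd C.k j)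
  · intro h
    have hC : ∀ j, θ (C.l j) = η (C.r j) := fun j => by
      simpa only [D, Fin.addCases_left] using h (Fin.castAdd C'.k j)
    have hC' : ∀ j, θ (eθ (C'.l j)) = η (eη (C'.r j)) := fun j => by
      simpa only [D, Fin.addCases_right] using h (Fin.natAdd C.k j)
    exact main_eq S hinv C C' eθ eη heθ heη heθr heηr θ η hC hC'
end

section
/- For a contraction C ∈ 𝒞_{m,n} let C^J ∈ 𝒞_{n,m} be the reflected contraction swapping left and right indices, and let R_C(θ,η) := ∏_{j=1}^{|C|}(1 − ∏_{p=1}^{m+n} S^{(m)}_{l_j,p}(θ,η)). Then δ_{C^J}(θ,η) S_{C^J}(θ,η) R_{C^J}(θ,η) = (−1)^{|C|} δ_C(η,θ) S_C(η,θ) R_C(η,θ) as distributions. -/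
open scoped BigOperators

lemma xivec_left {m n : ℕ} (θ : Fin m → ℝ) (η : Fin n → ℝ) (p : ℕ) (h : p < m) :
    xivec θ η p = θ ⟨p, h⟩ := by simp [xivec, h]

lemma xivec_right {m n : ℕ} (θ : Fin m → ℝ) (η : Fin n → ℝ) (q : ℕ) (h : q < n) :
    xivec θ η (m + q) = η ⟨q, h⟩ := by
  simp only [xivec, Nat.add_sub_cancel_left]
  rw [dif_neg (by omega), dif_pos h]

/-- Reflection identity: with `C^J ∈ 𝒞_{n,m}` the contraction obtained from `C ∈ 𝒞_{m,n}` by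
swapping the roles of left and right indices, one has, on the common support of `δ_{C^J}(θ,η)`
and `δ_C(η,θ)`,
`S_{C^J}(θ,η) R_{C^J}(θ,η) = (-1)^{|C|} S_C(η,θ) R_C(η,θ)`. -/
theorem stmt19 (S : ℝ → ℂ) (hsmooth : ContDiff ℝ (⊤ : ℕ∞) S)
    (hinv : ∀ t : ℝ, S t * S (-t) = 1)
    (hconj : ∀ t : ℝ, S (-t) = (starRingEnd ℂ) (S t))
    (m n : ℕ) (C : Contraction m n)
    (hl : Function.Injective C.l) (hr : Function.Injective C.r) :
    let CJ : Contraction n m := ⟨C.k, C.r, C.l⟩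
    ∀ (θ : Fin n → ℝ) (η : Fin m → ℝ), (∀ j : Fin C.k, θ (C.r j) = η (C.l j)) →
      SC S CJ θ η * RC S CJ θ η = (-1 : ℂ) ^ C.k * (SC S C η θ * RC S C η θ) := by
  intro CJ θ η hδ
  show SC S ⟨C.k, C.r, C.l⟩ θ η * RC S ⟨C.k, C.r, C.l⟩ θ η
      = (-1 : ℂ) ^ C.k * (SC S C η θ * RC S C η θ)
  have hS0 : S 0 * S 0 = 1 := by have := hinv 0; rwa [neg_zero] at this
  have hpair : ∀ (s : Finset ℕ) (f : ℕ → ℝ) (c : ℝ),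
      (∏ i ∈ s, S (f i - c)) * (∏ i ∈ s, S (c - f i)) = 1 := by
    intro s f c
    rw [← Finset.prod_mul_distrib]
    apply Finset.prod_eq_one
    intro i _
    have := hinv (f i - c); rwa [neg_sub] at this
  simp only [SC, RC]
  set a : ℕ → ℝ := xivec θ η with ha
  set b : ℕ → ℝ := xivec η θ with hb
  have hta : ∀ j : Fin C.k, a ((C.r j : ℕ)) = θ (C.r j) := by
    intro j; rw [ha, xivec_left θ η _ (C.r j).isLt]
  have htb : ∀ j : Fin C.k, b ((C.l j : ℕ)) = θ (C.r j) := by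
    intro j; rw [hb, xivec_left η θ _ (C.l j).isLt, hδ j]
  have hab : ∀ p, (h : p < n) → b (m + p) = a p := by
    intro p h; rw [hb, ha, xivec_right η θ p h, xivec_left θ η p h]
  have hba : ∀ q, (h : q < m) → a (n + q) = b q := by
    intro q h; rw [hb, ha, xivec_right θ η q h, xivec_left η θ q h]
  -- closed forms
  have hAJ : ∀ j : Fin C.k,
      (∏ p ∈ Finset.Ico ((C.r j : ℕ) + 1) (n + (C.l j : ℕ)), Smod S n a p (C.r j))
      = (∏ p ∈ Finset.Ico ((C.r j : ℕ) + 1) n, S (a p - θ (C.r j))) *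
        (∏ q ∈ Finset.range ((C.l j : ℕ)), S (θ (C.r j) - b q)) := by
    intro j
    rw [← Finset.prod_Ico_consecutive _ (show (C.r j : ℕ) + 1 ≤ n from (C.r j).isLt)
        (Nat.le_add_right n _)]
    congr 1
    · apply Finset.prod_congr rfl
      intro p hp
      simp only [Finset.mem_Ico] at hp
      have hr := (C.r j).isLt
      simp only [Smod]
      rw [if_neg (by omega), hta j]
    · rw [Finset.prod_Ico_eq_prod_range, Nat.add_sub_cancel_left]
      apply Finset.prod_congr rfl
      intro q hq
      simp only [Finset.mem_range] at hq
      have hlm := (C.l j).isLt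
      have hr := (C.r j).isLt
      simp only [Smod]
      rw [if_pos (Or.inr (by omega)), hta j, hba q (by omega)]
  have hA' : ∀ j : Fin C.k,
      (∏ p ∈ Finset.Ico ((C.l j : ℕ) + 1) (m + (C.r j : ℕ)), Smod S m b p (C.l j))
      = (∏ p ∈ Finset.Ico ((C.l j : ℕ) + 1) m, S (b p - θ (C.r j))) *
        (∏ q ∈ Finset.range ((C.r j : ℕ)), S (θ (C.r j) - a q)) := by
    intro j
    rw [← Finset.prod_Ico_consecutive _ (show (C.l j : ℕ) + 1 ≤ m from (C.l j).isLt)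
        (Nat.le_add_right m _)]
    congr 1
    · apply Finset.prod_congr rfl
      intro p hp
      simp only [Finset.mem_Ico] at hp
      have hlm := (C.l j).isLt
      simp only [Smod]
      rw [if_neg (by omega), htb j]
    · rw [Finset.prod_Ico_eq_prod_range, Nat.add_sub_cancel_left]
      apply Finset.prod_congr rfl
      intro q hq
      simp only [Finset.mem_range] at hq
      have hlm := (C.l j).isLt
      have hr := (C.r j).isLt
      simp only [Smod]
      rw [if_pos (Or.inr (by omega)), htb j, hab q (by omega)]
  have hPJ : ∀ j : Fin C.k,
      (∏ p ∈ Finset.range (n + m), Smod S n a ((C.r j : ℕ)) p)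
      = (∏ p ∈ Finset.range n, S (θ (C.r j) - a p)) *
        (∏ q ∈ Finset.range m, S (b q - θ (C.r j))) := by
    intro j
    rw [Finset.prod_range_add]
    congr 1
    · apply Finset.prod_congr rfl
      intro p hp
      simp only [Finset.mem_range] at hp
      have hr := (C.r j).isLt
      simp only [Smod]
      rw [if_neg (by omega), hta j]
    · apply Finset.prod_congr rfl
      intro q hq
      simp only [Finset.mem_range] at hq
      have hr := (C.r j).isLt
      simp only [Smod]
      rw [if_pos (Or.inl (by omega)), hta j, hba q hq]
  have hP' : ∀ j : Fin C.k,
      (∏ p ∈ Finset.range (m + n), Smod S m b ((C.l j : ℕ)) p)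
      = (∏ q ∈ Finset.range m, S (θ (C.r j) - b q)) *
        (∏ p ∈ Finset.range n, S (a p - θ (C.r j))) := by
    intro j
    rw [Finset.prod_range_add]
    congr 1
    · apply Finset.prod_congr rfl
      intro q hq
      simp only [Finset.mem_range] at hq
      have hlm := (C.l j).isLt
      simp only [Smod]
      rw [if_neg (by omega), htb j]
    · apply Finset.prod_congr rfl
      intro p hp
      simp only [Finset.mem_range] at hp
      have hlm := (C.l j).isLt
      simp only [Smod]
      rw [if_pos (Or.inl (by omega)), htb j, hab p hp]
  -- splitting lemmas for `P'`
  have hU : ∀ j : Fin C.k,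
      (∏ q ∈ Finset.range m, S (θ (C.r j) - b q))
      = (∏ q ∈ Finset.range ((C.l j : ℕ)), S (θ (C.r j) - b q)) * S 0 *
        (∏ q ∈ Finset.Ico ((C.l j : ℕ) + 1) m, S (θ (C.r j) - b q)) := by
    intro j
    rw [← Finset.prod_range_mul_prod_Ico _ (show (C.l j : ℕ) + 1 ≤ m from (C.l j).isLt),
      Finset.prod_range_succ, htb j, sub_self]
  have hV : ∀ j : Fin C.k,
      (∏ p ∈ Finset.range n, S (a p - θ (C.r j)))
      = (∏ p ∈ Finset.range ((C.r j : ℕ)), S (a p - θ (C.r j))) * S 0 *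
        (∏ p ∈ Finset.Ico ((C.r j : ℕ) + 1) n, S (a p - θ (C.r j))) := by
    intro j
    rw [← Finset.prod_range_mul_prod_Ico _ (show (C.r j : ℕ) + 1 ≤ n from (C.r j).isLt),
      Finset.prod_range_succ, hta j, sub_self]
  -- the two key per-`j` identities
  have key1 : ∀ j : Fin C.k,
      (∏ p ∈ Finset.range (n + m), Smod S n a ((C.r j : ℕ)) p) *
        (∏ p ∈ Finset.range (m + n), Smod S m b ((C.l j : ℕ)) p) = 1 := by
    intro j
    rw [hPJ j, hP' j]
    have h1 := hpair (Finset.range n) a (θ (C.r j))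
    have h2 := hpair (Finset.range m) b (θ (C.r j))
    linear_combination (∏ q ∈ Finset.range m, S (b q - θ (C.r j))) *
        (∏ q ∈ Finset.range m, S (θ (C.r j) - b q)) * h1 + h2
  have key2 : ∀ j : Fin C.k,
      (∏ p ∈ Finset.Ico ((C.r j : ℕ) + 1) (n + (C.l j : ℕ)), Smod S n a p (C.r j))
      = (∏ p ∈ Finset.Ico ((C.l j : ℕ) + 1) (m + (C.r j : ℕ)), Smod S m b p (C.l j)) *
        (∏ p ∈ Finset.range (m + n), Smod S m b ((C.l j : ℕ)) p) := by
    intro j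
    rw [hAJ j, hA' j, hP' j, hU j, hV j]
    have f1 := hpair (Finset.Ico ((C.l j : ℕ) + 1) m) b (θ (C.r j))
    have f2 := hpair (Finset.range ((C.r j : ℕ))) a (θ (C.r j))
    linear_combination
      (-((∏ p ∈ Finset.Ico ((C.r j : ℕ) + 1) n, S (a p - θ (C.r j))) *
          (∏ q ∈ Finset.range ((C.l j : ℕ)), S (θ (C.r j) - b q)) *
          ((∏ p ∈ Finset.range ((C.r j : ℕ)), S (a p - θ (C.r j))) *
            (∏ q ∈ Finset.range ((C.r j : ℕ)), S (θ (C.r j) - a q))) *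
          (S 0 * S 0))) * f1 +
      (-((∏ p ∈ Finset.Ico ((C.r j : ℕ) + 1) n, S (a p - θ (C.r j))) *
          (∏ q ∈ Finset.range ((C.l j : ℕ)), S (θ (C.r j) - b q)) *
          (S 0 * S 0))) * f2 +
      (-((∏ p ∈ Finset.Ico ((C.r j : ℕ) + 1) n, S (a p - θ (C.r j))) *
          (∏ q ∈ Finset.range ((C.l j : ℕ)), S (θ (C.r j) - b q)))) * hS0
  -- the interference parts agree
  have hB : (∏ j : Fin C.k, ∏ i : Fin C.k,
        if (C.l i : ℕ) < (C.l j : ℕ) ∧ (C.r i : ℕ) < (C.r j : ℕ) then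
          Smod S n a ((C.r j : ℕ)) (n + (C.l i : ℕ)) else 1)
      = ∏ j : Fin C.k, ∏ i : Fin C.k,
        if (C.r i : ℕ) < (C.r j : ℕ) ∧ (C.l i : ℕ) < (C.l j : ℕ) then
          Smod S m b ((C.l j : ℕ)) (m + (C.r i : ℕ)) else 1 := by
    apply Finset.prod_congr rfl; intro j _
    apply Finset.prod_congr rfl; intro i _
    by_cases hc : (C.r i : ℕ) < (C.r j : ℕ) ∧ (C.l i : ℕ) < (C.l j : ℕ)
    · rw [if_pos ⟨hc.2, hc.1⟩, if_pos hc]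
      have hrn := (C.r j).isLt
      have hlm := (C.l j).isLt
      have hrn' := (C.r i).isLt
      have hlm' := (C.l i).isLt
      simp only [Smod]
      rw [if_pos (Or.inl (by omega)), if_pos (Or.inl (by omega))]
      rw [hta j, htb j, hba _ hlm', hab _ hrn', htb i, hta i]
    · rw [if_neg (fun h => hc ⟨h.2, h.1⟩), if_neg hc]
  -- put everything together
  rw [hB]
  have hcomb :
      (∏ j : Fin C.k, ∏ p ∈ Finset.Ico ((C.r j : ℕ) + 1) (n + (C.l j : ℕ)),
          Smod S n a p (C.r j)) *
        (∏ j : Fin C.k, (1 - ∏ p ∈ Finset.range (n + m), Smod S n a ((C.r j : ℕ)) p))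
      = (-1 : ℂ) ^ C.k *
        ((∏ j : Fin C.k, ∏ p ∈ Finset.Ico ((C.l j : ℕ) + 1) (m + (C.r j : ℕ)),
            Smod S m b p (C.l j)) *
          (∏ j : Fin C.k, (1 - ∏ p ∈ Finset.range (m + n), Smod S m b ((C.l j : ℕ)) p))) := by
    rw [← Finset.prod_mul_distrib, ← Finset.prod_mul_distrib,
      show ((-1 : ℂ) ^ C.k) = ∏ _j : Fin C.k, (-1 : ℂ) by simp, ← Finset.prod_mul_distrib]
    apply Finset.prod_congr rfl
    intro j _
    rw [key2 j]
    linear_combination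
      (-((∏ p ∈ Finset.Ico ((C.l j : ℕ) + 1) (m + (C.r j : ℕ)), Smod S m b p (C.l j)))) *
        key1 j
  linear_combination
    (∏ j : Fin C.k, ∏ i : Fin C.k,
      if (C.r i : ℕ) < (C.r j : ℕ) ∧ (C.l i : ℕ) < (C.l j : ℕ) then
        Smod S m b ((C.l j : ℕ)) (m + (C.r i : ℕ)) else 1) * hcomb
end
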